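/- arXiv:2504.03517 — 8 statements merged into one kernel-verified Lean document; each statement's English description precedes it below -/
import Mathlib

section
/- Let L be an abstract logic, 𝒞 a class of L-models, and Θ = (Θ_M)_{M∈𝒞} an (L,𝒞)-pair (so every Θ_M inductively captures the L-semantics). Then for every fragment L' of L and every 𝒞-sample S = (𝒫,𝒩), S is L'-separable if and only if there exists an S-separating L'-formula of size at most n^S_Θ := Σ_{τ∈𝒯} Π_{M∈𝒫∪𝒩} |SEM_M(τ)|. -/
open scoped Classical

/-- The syntax of an abstract logic: a finite non-empty set of formula types `T`
with a non-empty set `Tf` of final types, and operator sets of arities 0, 1, 2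
(with `Op0` non-empty), each operator having a type and allowed argument types. -/
structure AbsLogic where
  T : Type
  [fintypeT : Fintype T]
  neT : Nonempty T
  Tf : Set T
  neTf : Tf.Nonempty
  Op0 : Type
  Op1 : Type
  Op2 : Type
  neOp0 : Nonempty Op0
  ty0 : Op0 → T
  ty1 : Op1 → T
  ty2 : Op2 → T
  arg1 : Op1 → Set T
  arg21 : Op2 → Set T
  arg22 : Op2 → Set T

attribute [instance] AbsLogic.fintypeT

/-- (Raw) formulas of an abstract logic. -/
inductive Fm (L : AbsLogic) : Type
  | op0 : L.Op0 → Fm L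
  | op1 : L.Op1 → Fm L → Fm L
  | op2 : L.Op2 → Fm L → Fm L → Fm L

namespace Fm

variable {L : AbsLogic}

/-- The type of a formula. -/
def typeOf : Fm L → L.T
  | op0 o => L.ty0 o
  | op1 o _ => L.ty1 o
  | op2 o _ _ => L.ty2 o

/-- Well-typedness: arguments of operators have allowed types. -/
def WT : Fm L → Prop
  | op0 _ => True
  | op1 o φ => WT φ ∧ typeOf φ ∈ L.arg1 o
  | op2 o φ ψ => WT φ ∧ WT ψ ∧ typeOf φ ∈ L.arg21 o ∧ typeOf ψ ∈ L.arg22 o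

/-- The set of subformulas of a formula. -/
def Sub : Fm L → Set (Fm L)
  | op0 o => {op0 o}
  | op1 o φ => insert (op1 o φ) (Sub φ)
  | op2 o φ ψ => insert (op2 o φ ψ) (Sub φ ∪ Sub ψ)

/-- The (syntax-DAG) size of a formula: its number of distinct subformulas. -/
noncomputable def sz (φ : Fm L) : ℕ := (Sub φ).ncard

end Fm

/-- A fragment of a logic: a subset of the operators of each arity. -/
structure Fragment (L : AbsLogic) where
  F0 : Set L.Op0
  F1 : Set L.Op1
  F2 : Set L.Op2

/-- A formula uses only operators of the fragment. -/
def InFrag {L : AbsLogic} (Fr : Fragment L) : Fm L → Prop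
  | .op0 o => o ∈ Fr.F0
  | .op1 o φ => o ∈ Fr.F1 ∧ InFrag Fr φ
  | .op2 o φ ψ => o ∈ Fr.F2 ∧ InFrag Fr φ ∧ InFrag Fr ψ

/-- A formula of the fragment `Fr`: well-typed, built from operators of `Fr`. -/
def IsFmOf {L : AbsLogic} (Fr : Fragment L) (φ : Fm L) : Prop := φ.WT ∧ InFrag Fr φ

/-- A class of `L`-models: structures with a satisfaction relation for formulas. -/
structure ModelClass (L : AbsLogic) where
  Model : Type
  sat : Model → Fm L → Prop

/-- An `(L,𝒞)`-pair: for every model `M`, a finite set of semantic values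
`SEM M = ⋃ τ, SEM M τ` (pairwise disjoint over types) and a type-respecting
semantic function `sem M`, which captures the `L`-semantics and satisfies the
inductive property. -/
structure LCPair (L : AbsLogic) (C : ModelClass L) where
  V : C.Model → Type
  SEM : (M : C.Model) → L.T → Set (V M)
  sem : (M : C.Model) → Fm L → V M
  finite_SEM : ∀ M τ, (SEM M τ).Finite
  disj_SEM : ∀ M (τ τ' : L.T), τ ≠ τ' → Disjoint (SEM M τ) (SEM M τ')
  typed : ∀ (M : C.Model) (φ : Fm L), φ.WT → sem M φ ∈ SEM M φ.typeOf
  captures : ∀ (M : C.Model) (φ φ' : Fm L), φ.WT → φ'.WT → φ.typeOf = φ'.typeOf →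
    φ.typeOf ∈ L.Tf → sem M φ = sem M φ' → (C.sat M φ ↔ C.sat M φ')
  ind1 : ∀ (M : C.Model) (o : L.Op1), ∃ f : V M → V M,
    ∀ φ : Fm L, φ.WT → φ.typeOf ∈ L.arg1 o → sem M (.op1 o φ) = f (sem M φ)
  ind2 : ∀ (M : C.Model) (o : L.Op2), ∃ f : V M → V M → V M,
    ∀ φ ψ : Fm L, φ.WT → ψ.WT → φ.typeOf ∈ L.arg21 o → ψ.typeOf ∈ L.arg22 o →
      sem M (.op2 o φ ψ) = f (sem M φ) (sem M ψ)

/-!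
Take a separating formula `φ` of minimal size. If two distinct subformulas `ψ ≠ ψ'` of `φ` had
the same type and the same semantic value in every model of the sample, then, choosing `ψ'` not
a subformula of `ψ`, replacing every occurrence of `ψ'` in `φ` by `ψ` keeps the formula
well-typed, inside the fragment and (by the inductive property) semantically unchanged on the
sample, so still separating; but it merges `ψ` and `ψ'` and has strictly fewer subformulas.
Hence on the subformulas of `φ` of type `τ` the map `ψ ↦ (sem_M ψ)_{M ∈ P ∪ N}` is injective,
with values in `∏_{M ∈ P ∪ N} SEM_M(τ)`.
-/

namespace Fm

variable {L : AbsLogic}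

lemma mem_Sub_self (φ : Fm L) : φ ∈ φ.Sub := by
  cases φ <;> simp [Sub]

lemma Sub_finite (φ : Fm L) : φ.Sub.Finite := by
  induction φ with
  | op0 o => exact Set.finite_singleton _
  | op1 o φ ih => exact ih.insert _
  | op2 o φ ψ ihφ ihψ => exact (ihφ.union ihψ).insert _

lemma Sub_subset_of_mem {φ ψ : Fm L} (h : ψ ∈ φ.Sub) : ψ.Sub ⊆ φ.Sub := by
  induction φ with
  | op0 o => rw [Set.mem_singleton_iff.1 h]
  | op1 o φ ih =>
    rcases h with rfl | h
    · rfl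
    · exact (ih h).trans (Set.subset_insert _ _)
  | op2 o φ₁ φ₂ ih₁ ih₂ =>
    rcases h with rfl | h | h
    · rfl
    · exact ((ih₁ h).trans Set.subset_union_left).trans (Set.subset_insert _ _)
    · exact ((ih₂ h).trans Set.subset_union_right).trans (Set.subset_insert _ _)

lemma sizeOf_le_of_mem_Sub {φ ψ : Fm L} (h : ψ ∈ φ.Sub) : sizeOf ψ ≤ sizeOf φ := by
  induction φ with
  | op0 o => rw [Set.mem_singleton_iff.1 h]
  | op1 o φ ih =>
    rcases h with rfl | h
    · rfl
    · have := ih h; simp only [op1.sizeOf_spec]; omega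
  | op2 o φ₁ φ₂ ih₁ ih₂ =>
    rcases h with rfl | h | h
    · rfl
    · have := ih₁ h; simp only [op2.sizeOf_spec]; omega
    · have := ih₂ h; simp only [op2.sizeOf_spec]; omega

lemma sizeOf_lt_of_mem_Sub {φ ψ : Fm L} (h : ψ ∈ φ.Sub) (hne : ψ ≠ φ) :
    sizeOf ψ < sizeOf φ := by
  cases φ with
  | op0 o => exact absurd h hne
  | op1 o φ =>
    rcases h with h | h
    · exact absurd h hne
    · have := sizeOf_le_of_mem_Sub h; simp only [op1.sizeOf_spec]; omega
  | op2 o φ₁ φ₂ =>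
    rcases h with h | h | h
    · exact absurd h hne
    · have := sizeOf_le_of_mem_Sub h; simp only [op2.sizeOf_spec]; omega
    · have := sizeOf_le_of_mem_Sub h; simp only [op2.sizeOf_spec]; omega

lemma eq_of_mem_Sub_of_mem_Sub {φ ψ : Fm L} (hψ : ψ ∈ φ.Sub) (hφ : φ ∈ ψ.Sub) : ψ = φ := by
  by_contra hne
  exact (sizeOf_lt_of_mem_Sub hψ hne).not_ge (sizeOf_le_of_mem_Sub hφ)

lemma WT_of_mem_Sub {φ ψ : Fm L} (hφ : φ.WT) (h : ψ ∈ φ.Sub) : ψ.WT := by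
  induction φ with
  | op0 o => rwa [Set.mem_singleton_iff.1 h]
  | op1 o φ ih =>
    rcases h with rfl | h
    · exact hφ
    · exact ih hφ.1 h
  | op2 o φ₁ φ₂ ih₁ ih₂ =>
    rcases h with rfl | h | h
    · exact hφ
    · exact ih₁ hφ.1 h
    · exact ih₂ hφ.2.1 h

noncomputable def replace (a b : Fm L) : Fm L → Fm L
  | op0 o => if op0 o = a then b else op0 o
  | op1 o φ => if op1 o φ = a then b else op1 o (replace a b φ)
  | op2 o φ ψ => if op2 o φ ψ = a then b else op2 o (replace a b φ) (replace a b ψ)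

variable {a b : Fm L}

@[simp]
lemma replace_self : replace a b a = b := by
  cases a <;> simp [replace]

lemma replace_of_not_mem_Sub {σ : Fm L} (h : a ∉ σ.Sub) : replace a b σ = σ := by
  induction σ with
  | op0 o =>
    rw [Sub, Set.mem_singleton_iff] at h
    simp [replace, Ne.symm h]
  | op1 o φ ih =>
    simp only [Sub, Set.mem_insert_iff, not_or] at h
    simp [replace, Ne.symm h.1, ih h.2]
  | op2 o φ ψ ihφ ihψ =>
    simp only [Sub, Set.mem_insert_iff, Set.mem_union, not_or] at h
    simp [replace, Ne.symm h.1, ihφ h.2.1, ihψ h.2.2]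

lemma typeOf_replace (hty : b.typeOf = a.typeOf) (σ : Fm L) :
    (replace a b σ).typeOf = σ.typeOf := by
  by_cases h : σ = a
  · rw [h, replace_self, hty]
  · cases σ <;> simp [replace, h, typeOf]

lemma WT_replace (hb : b.WT) (hty : b.typeOf = a.typeOf) {σ : Fm L} (hσ : σ.WT) :
    (replace a b σ).WT := by
  induction σ with
  | op0 o => by_cases h : op0 o = a <;> simp [replace, h, hb, hσ]
  | op1 o φ ih =>
    by_cases h : op1 o φ = a
    · simpa [replace, h] using hb
    · simp only [replace, h, if_false, WT, typeOf_replace hty]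
      exact ⟨ih hσ.1, hσ.2⟩
  | op2 o φ ψ ihφ ihψ =>
    by_cases h : op2 o φ ψ = a
    · simpa [replace, h] using hb
    · simp only [replace, h, if_false, WT, typeOf_replace hty]
      exact ⟨ihφ hσ.1, ihψ hσ.2.1, hσ.2.2⟩

lemma Sub_replace_subset (σ : Fm L) :
    (replace a b σ).Sub ⊆ replace a b '' σ.Sub ∪ b.Sub := by
  induction σ with
  | op0 o => by_cases h : op0 o = a <;> simp [replace, h, Sub]
  | op1 o φ ih =>
    by_cases h : op1 o φ = a
    · simp [replace, h]
    · simp only [replace, h, if_false, Sub]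
      refine Set.insert_subset (Or.inl ⟨op1 o φ, Set.mem_insert _ _, by simp [replace, h]⟩)
        (ih.trans ?_)
      gcongr
      exact Set.subset_insert _ _
  | op2 o φ ψ ihφ ihψ =>
    by_cases h : op2 o φ ψ = a
    · simp [replace, h]
    · simp only [replace, h, if_false, Sub]
      refine Set.insert_subset (Or.inl ⟨op2 o φ ψ, Set.mem_insert _ _, by simp [replace, h]⟩)
        (Set.union_subset (ihφ.trans ?_) (ihψ.trans ?_))
      all_goals gcongr
      exacts [Set.subset_union_left.trans (Set.subset_insert _ _),
        Set.subset_union_right.trans (Set.subset_insert _ _)]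

lemma Sub_replace_subset_image {φ : Fm L} (hb : b ∈ φ.Sub) (hab : a ∉ b.Sub) :
    (replace a b φ).Sub ⊆ replace a b '' φ.Sub := by
  refine (Sub_replace_subset φ).trans (Set.union_subset subset_rfl fun χ hχ => ?_)
  exact ⟨χ, Sub_subset_of_mem hb hχ,
    replace_of_not_mem_Sub fun ha => hab (Sub_subset_of_mem hχ ha)⟩

lemma sz_replace_lt {φ : Fm L} (ha : a ∈ φ.Sub) (hb : b ∈ φ.Sub) (hab : a ∉ b.Sub) :
    (replace a b φ).sz < φ.sz := by
  have hne : a ≠ b := fun h => hab (h ▸ mem_Sub_self a)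
  have not_injOn : ¬ Set.InjOn (replace a b) φ.Sub := fun hinj =>
    hne (hinj ha hb (by rw [replace_self, replace_of_not_mem_Sub hab]))
  calc (replace a b φ).sz ≤ (replace a b '' φ.Sub).ncard :=
        Set.ncard_le_ncard (Sub_replace_subset_image hb hab) ((Sub_finite φ).image _)
    _ < φ.sz :=
        (Set.ncard_image_le (Sub_finite φ)).lt_of_ne
          fun h => not_injOn (Set.injOn_of_ncard_image_eq h (Sub_finite φ))

end Fm

lemma InFrag_of_mem_Sub {L : AbsLogic} {Fr : Fragment L} {φ ψ : Fm L} (hφ : InFrag Fr φ)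
    (h : ψ ∈ φ.Sub) : InFrag Fr ψ := by
  induction φ with
  | op0 o => rwa [Set.mem_singleton_iff.1 h]
  | op1 o φ ih =>
    rcases h with rfl | h
    · exact hφ
    · exact ih hφ.2 h
  | op2 o φ₁ φ₂ ih₁ ih₂ =>
    rcases h with rfl | h | h
    · exact hφ
    · exact ih₁ hφ.2.1 h
    · exact ih₂ hφ.2.2 h

lemma InFrag_replace {L : AbsLogic} {Fr : Fragment L} {a b : Fm L} (hb : InFrag Fr b)
    {σ : Fm L} (hσ : InFrag Fr σ) : InFrag Fr (Fm.replace a b σ) := by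
  induction σ with
  | op0 o => by_cases h : Fm.op0 o = a <;> simpa [Fm.replace, h]
  | op1 o φ ih =>
    by_cases h : Fm.op1 o φ = a
    · simpa [Fm.replace, h] using hb
    · simp only [Fm.replace, h, if_false, InFrag]
      exact ⟨hσ.1, ih hσ.2⟩
  | op2 o φ ψ ihφ ihψ =>
    by_cases h : Fm.op2 o φ ψ = a
    · simpa [Fm.replace, h] using hb
    · simp only [Fm.replace, h, if_false, InFrag]
      exact ⟨hσ.1, ihφ hσ.2.1, ihψ hσ.2.2⟩

def Separates {L : AbsLogic} (C : ModelClass L) (Fr : Fragment L) (P N : Finset C.Model)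
    (φ : Fm L) : Prop :=
  IsFmOf Fr φ ∧ φ.typeOf ∈ L.Tf ∧ (∀ M ∈ P, C.sat M φ) ∧ (∀ M ∈ N, ¬ C.sat M φ)

section Separation

variable {L : AbsLogic} {C : ModelClass L} (Θ : LCPair L C) {Fr : Fragment L}
  {P N : Finset C.Model}

lemma LCPair.sem_replace (M : C.Model) {a b : Fm L} (hb : b.WT) (hty : b.typeOf = a.typeOf)
    (hsem : Θ.sem M b = Θ.sem M a) {σ : Fm L} (hσ : σ.WT) :
    Θ.sem M (Fm.replace a b σ) = Θ.sem M σ := by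
  induction σ with
  | op0 o => by_cases h : Fm.op0 o = a <;> simp [Fm.replace, h, hsem]
  | op1 o φ ih =>
    by_cases h : Fm.op1 o φ = a
    · simp [Fm.replace, h, hsem]
    obtain ⟨f, hf⟩ := Θ.ind1 M o
    simp only [Fm.replace, h, if_false]
    rw [hf _ (Fm.WT_replace hb hty hσ.1) (Fm.typeOf_replace hty φ ▸ hσ.2), ih hσ.1,
      hf _ hσ.1 hσ.2]
  | op2 o φ ψ ihφ ihψ =>
    by_cases h : Fm.op2 o φ ψ = a
    · simp [Fm.replace, h, hsem]
    obtain ⟨f, hf⟩ := Θ.ind2 M o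
    simp only [Fm.replace, h, if_false]
    rw [hf _ _ (Fm.WT_replace hb hty hσ.1) (Fm.WT_replace hb hty hσ.2.1)
      (Fm.typeOf_replace hty φ ▸ hσ.2.2.1) (Fm.typeOf_replace hty ψ ▸ hσ.2.2.2),
      ihφ hσ.1, ihψ hσ.2.1, hf _ _ hσ.1 hσ.2.1 hσ.2.2.1 hσ.2.2.2]

lemma Separates.replace {φ a b : Fm L} (hφ : Separates C Fr P N φ) (hb : b ∈ φ.Sub)
    (hty : b.typeOf = a.typeOf) (hsem : ∀ M ∈ P ∪ N, Θ.sem M b = Θ.sem M a) :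
    Separates C Fr P N (Fm.replace a b φ) := by
  obtain ⟨⟨hWT, hFr⟩, hTf, hP, hN⟩ := hφ
  have hbWT := Fm.WT_of_mem_Sub hWT hb
  have hty' := Fm.typeOf_replace hty φ
  have hsat : ∀ M ∈ P ∪ N, C.sat M (Fm.replace a b φ) ↔ C.sat M φ := fun M hM =>
    Θ.captures M _ φ (Fm.WT_replace hbWT hty hWT) hWT hty' (hty' ▸ hTf)
      (Θ.sem_replace M hbWT hty (hsem M hM) hWT)
  exact ⟨⟨Fm.WT_replace hbWT hty hWT, InFrag_replace (InFrag_of_mem_Sub hFr hb) hFr⟩, hty' ▸ hTf,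
    fun M hM => (hsat M (Finset.mem_union_left _ hM)).2 (hP M hM),
    fun M hM h => hN M hM ((hsat M (Finset.mem_union_right _ hM)).1 h)⟩

lemma exists_separates_forall_sem_eq_imp_eq {φ₀ : Fm L} (hφ₀ : Separates C Fr P N φ₀) :
    ∃ φ, Separates C Fr P N φ ∧ ∀ ψ ∈ φ.Sub, ∀ ψ' ∈ φ.Sub, ψ.typeOf = ψ'.typeOf →
      (∀ M ∈ P ∪ N, Θ.sem M ψ = Θ.sem M ψ') → ψ = ψ' := by
  obtain ⟨φ, hφ, hmin⟩ := (measure Fm.sz).wf.has_min {φ | Separates C Fr P N φ} ⟨φ₀, hφ₀⟩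
  refine ⟨φ, hφ, fun ψ hψ ψ' hψ' hty hsem => ?_⟩
  by_contra hne
  have : ψ ∉ ψ'.Sub ∨ ψ' ∉ ψ.Sub := by
    by_contra! h
    exact hne (Fm.eq_of_mem_Sub_of_mem_Sub h.2 h.1).symm
  rcases this with h | h
  · exact hmin _ (hφ.replace Θ hψ' hty.symm fun M hM => (hsem M hM).symm)
      (Fm.sz_replace_lt hψ hψ' h)
  · exact hmin _ (hφ.replace Θ hψ hty hsem) (Fm.sz_replace_lt hψ' hψ h)

lemma ncard_le_sum_prod_ncard_SEM (S : Finset C.Model) {F : Set (Fm L)} (hF : F.Finite)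
    (hWT : ∀ ψ ∈ F, ψ.WT) (hinj : ∀ ψ ∈ F, ∀ ψ' ∈ F, ψ.typeOf = ψ'.typeOf →
      (∀ M ∈ S, Θ.sem M ψ = Θ.sem M ψ') → ψ = ψ') :
    F.ncard ≤ ∑ τ : L.T, ∏ M ∈ S, (Θ.SEM M τ).ncard := by
  rw [Set.ncard_eq_toFinset_card F hF, Finset.card_eq_sum_card_fiberwise
    (f := Fm.typeOf) (t := Finset.univ) fun _ _ => Finset.mem_coe.2 (Finset.mem_univ _)]
  gcongr with τ
  calc (hF.toFinset.filter fun ψ => ψ.typeOf = τ).card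
      ≤ (S.pi fun M => (Θ.finite_SEM M τ).toFinset).card := by
        refine Finset.card_le_card_of_injOn (fun ψ M _ => Θ.sem M ψ) ?_ ?_
        · intro ψ hψ
          simp only [Finset.coe_filter, Set.Finite.mem_toFinset, Set.mem_ofPred_eq] at hψ
          simp only [Finset.mem_coe, Finset.mem_pi, Set.Finite.mem_toFinset]
          exact fun M _ => hψ.2 ▸ Θ.typed M ψ (hWT ψ hψ.1)
        · intro ψ hψ ψ' hψ' h
          simp only [Finset.coe_filter, Set.Finite.mem_toFinset, Set.mem_ofPred_eq] at hψ hψ'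
          exact hinj ψ hψ.1 ψ' hψ'.1 (hψ.2.trans hψ'.2.symm) fun M hM =>
            congrFun (congrFun h M) hM
    _ = ∏ M ∈ S, (Θ.SEM M τ).ncard := by
        rw [Finset.card_pi]
        exact Finset.prod_congr rfl fun M _ => (Set.ncard_eq_toFinset_card _ _).symm

end Separation

/-- **Theorem (size of separating formulas).** For every fragment `Fr` of `L` and
every `𝒞`-sample `(P, N)`, the sample is `Fr`-separable iff there is a separating
final `Fr`-formula of size at most `∑ τ, ∏_{M ∈ P ∪ N} |SEM M τ|`. -/
theorem size_separation
    (L : AbsLogic) (C : ModelClass L) (Θ : LCPair L C) (Fr : Fragment L)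
    (P N : Finset C.Model) :
    (∃ φ : Fm L, IsFmOf Fr φ ∧ φ.typeOf ∈ L.Tf ∧
        (∀ M ∈ P, C.sat M φ) ∧ (∀ M ∈ N, ¬ C.sat M φ)) ↔
      (∃ φ : Fm L, IsFmOf Fr φ ∧ φ.typeOf ∈ L.Tf ∧
        (∀ M ∈ P, C.sat M φ) ∧ (∀ M ∈ N, ¬ C.sat M φ) ∧
        φ.sz ≤ ∑ τ : L.T, ∏ M ∈ P ∪ N, (Θ.SEM M τ).ncard) := by
  constructor
  · rintro ⟨φ₀, hφ₀⟩
    obtain ⟨φ, ⟨hFr, hTf, hP, hN⟩, hinj⟩ := exists_separates_forall_sem_eq_imp_eq Θ hφ₀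
    exact ⟨φ, hFr, hTf, hP, hN, ncard_le_sum_prod_ncard_SEM Θ (P ∪ N) (Fm.Sub_finite φ)
      (fun _ => Fm.WT_of_mem_Sub hFr.1) hinj⟩
  · rintro ⟨φ, hFr, hTf, hP, hN, -⟩
    exact ⟨φ, hFr, hTf, hP, hN⟩
end

section
/- With the fixed-point sets SEM^{L'}_S defined from an (L,𝒞)-pair Θ and a finite set S ⊆ 𝒞 of models, there exists a function φ_Θ from SEM^{L'}_S to L'-formulas such that for every X ∈ SEM^{L'}_S: (1) sem_Θ(φ_Θ(X)) = X, where sem_Θ(ψ) := (sem_M(ψ))_{M∈S}; and (2) every subformula ψ ∈ Sub(φ_Θ(X)) satisfies ψ = φ_Θ(sem_Θ(ψ)). Consequently sem_Θ is injective on Sub(φ_Θ(X)) and sz(φ_Θ(X)) ≤ |SEM^{L'}_S|. -/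
open scoped Classical

/-- An `(L,M)`-pair for each model `M` of a class (here, a type) of models,
satisfying the inductive property: a finite, type-respecting semantic assignment. -/
structure IndPair (L : AbsLogic) (Model : Type) where
  V : Model → Type
  SEM : (M : Model) → L.T → Set (V M)
  sem : (M : Model) → Fm L → V M
  finite_SEM : ∀ M τ, (SEM M τ).Finite
  disj_SEM : ∀ M (τ τ' : L.T), τ ≠ τ' → Disjoint (SEM M τ) (SEM M τ')
  typed : ∀ (M : Model) (φ : Fm L), φ.WT → sem M φ ∈ SEM M φ.typeOf
  ind1 : ∀ (M : Model) (o : L.Op1), ∃ f : V M → V M,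
    ∀ φ : Fm L, φ.WT → φ.typeOf ∈ L.arg1 o → sem M (.op1 o φ) = f (sem M φ)
  ind2 : ∀ (M : Model) (o : L.Op2), ∃ f : V M → V M → V M,
    ∀ φ ψ : Fm L, φ.WT → ψ.WT → φ.typeOf ∈ L.arg21 o → ψ.typeOf ∈ L.arg22 o →
      sem M (.op2 o φ ψ) = f (sem M φ) (sem M ψ)

/-- The fixed-point ("level") sets `SEM^{L'}_{S,i}(τ)` of tuples of semantic values,
computed from the arity-0 operators of the fragment by applying the
witnessing functions `f1`, `f2` of the inductive property. -/
def semLevel (L : AbsLogic) (Model : Type) (Θ : IndPair L Model) (Fr : Fragment L)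
    (S : Finset Model)
    (f1 : (M : Model) → L.Op1 → Θ.V M → Θ.V M)
    (f2 : (M : Model) → L.Op2 → Θ.V M → Θ.V M → Θ.V M) :
    ℕ → L.T → Set ((M : {x // x ∈ S}) → Θ.V M.val)
  | 0, τ => {X | ∃ o ∈ Fr.F0, L.ty0 o = τ ∧
      X = fun M : {x // x ∈ S} => Θ.sem M.val (Fm.op0 o)}
  | i + 1, τ =>
      semLevel L Model Θ Fr S f1 f2 i τ ∪
      {X | ∃ o ∈ Fr.F1, L.ty1 o = τ ∧ ∃ τ' ∈ L.arg1 o,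
          ∃ Y ∈ semLevel L Model Θ Fr S f1 f2 i τ',
          X = fun M : {x // x ∈ S} => f1 M.val o (Y M)} ∪
      {X | ∃ o ∈ Fr.F2, L.ty2 o = τ ∧ ∃ τ1 ∈ L.arg21 o, ∃ τ2 ∈ L.arg22 o,
          ∃ Y1 ∈ semLevel L Model Θ Fr S f1 f2 i τ1,
          ∃ Y2 ∈ semLevel L Model Θ Fr S f1 f2 i τ2,
          X = fun M : {x // x ∈ S} => f2 M.val o (Y1 M) (Y2 M)}

/-- `SEM^{L'}_S := ⋃ τ, ⋃ i, SEM^{L'}_{S,i}(τ)`. -/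
def semFix (L : AbsLogic) (Model : Type) (Θ : IndPair L Model) (Fr : Fragment L)
    (S : Finset Model)
    (f1 : (M : Model) → L.Op1 → Θ.V M → Θ.V M)
    (f2 : (M : Model) → L.Op2 → Θ.V M → Θ.V M → Θ.V M) :
    Set ((M : {x // x ∈ S}) → Θ.V M.val) :=
  ⋃ τ : L.T, ⋃ i : ℕ, semLevel L Model Θ Fr S f1 f2 i τ

section Aux

variable (L : AbsLogic) (Model : Type) (Θ : IndPair L Model) (Fr : Fragment L)
    (S : Finset Model)
    (f1 : (M : Model) → L.Op1 → Θ.V M → Θ.V M)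
    (f2 : (M : Model) → L.Op2 → Θ.V M → Θ.V M → Θ.V M)

/-- Monotonicity of the level sets. -/
lemma semLevel_mono : ∀ {i j : ℕ}, i ≤ j → ∀ τ,
    semLevel L Model Θ Fr S f1 f2 i τ ⊆ semLevel L Model Θ Fr S f1 f2 j τ := by
  intro i j hij
  induction j with
  | zero => simpa [Nat.le_zero.mp hij] using fun τ => Set.Subset.rfl
  | succ j ih =>
    intro τ
    rcases Nat.lt_or_ge i (j+1) with h | h
    · intro X hX
      have : X ∈ semLevel L Model Θ Fr S f1 f2 j τ := ih (Nat.lt_succ_iff.mp h) τ hX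
      exact Or.inl (Or.inl this)
    · have : i = j + 1 := le_antisymm hij h
      subst this; exact Set.Subset.rfl

/-- The recursive formula builder. -/
noncomputable def buildF : ℕ → ((M : {x // x ∈ S}) → Θ.V M.val) → Fm L
  | 0, X =>
    if h : ∃ o, o ∈ Fr.F0 ∧ X = fun M : {x // x ∈ S} => Θ.sem M.val (.op0 o) then
      .op0 h.choose
    else .op0 (Classical.choice L.neOp0)
  | i + 1, X =>
    if ∃ τ, X ∈ semLevel L Model Θ Fr S f1 f2 i τ then
      buildF i X
    else if h1 : ∃ p : L.Op1 × ((M : {x // x ∈ S}) → Θ.V M.val),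
        p.1 ∈ Fr.F1 ∧ (∃ τ', τ' ∈ L.arg1 p.1 ∧ p.2 ∈ semLevel L Model Θ Fr S f1 f2 i τ') ∧
        X = fun M : {x // x ∈ S} => f1 M.val p.1 (p.2 M) then
      .op1 h1.choose.1 (buildF i h1.choose.2)
    else if h2 : ∃ p : L.Op2 × ((M : {x // x ∈ S}) → Θ.V M.val) ×
          ((M : {x // x ∈ S}) → Θ.V M.val),
        p.1 ∈ Fr.F2 ∧ (∃ τ1, τ1 ∈ L.arg21 p.1 ∧ p.2.1 ∈ semLevel L Model Θ Fr S f1 f2 i τ1) ∧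
        (∃ τ2, τ2 ∈ L.arg22 p.1 ∧ p.2.2 ∈ semLevel L Model Θ Fr S f1 f2 i τ2) ∧
        X = fun M : {x // x ∈ S} => f2 M.val p.1 (p.2.1 M) (p.2.2 M) then
      .op2 h2.choose.1 (buildF i h2.choose.2.1) (buildF i h2.choose.2.2)
    else .op0 (Classical.choice L.neOp0)

/-- The representation function. -/
noncomputable def phiT (X : (M : {x // x ∈ S}) → Θ.V M.val) : Fm L :=
  if h : ∃ i, ∃ τ, X ∈ semLevel L Model Θ Fr S f1 f2 i τ then
    buildF L Model Θ Fr S f1 f2 (Nat.find h) X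
  else .op0 (Classical.choice L.neOp0)

lemma buildF_stab : ∀ {i j : ℕ}, i ≤ j →
    ∀ X, (∃ τ, X ∈ semLevel L Model Θ Fr S f1 f2 i τ) →
    buildF L Model Θ Fr S f1 f2 j X = buildF L Model Θ Fr S f1 f2 i X := by
  intro i j hij
  induction j with
  | zero => intro X _; rw [Nat.le_zero.mp hij]
  | succ j ih =>
    intro X hX
    rcases Nat.lt_or_ge i (j+1) with h | h
    · have hij' : i ≤ j := Nat.lt_succ_iff.mp h
      have hXj : ∃ τ, X ∈ semLevel L Model Θ Fr S f1 f2 j τ :=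
        hX.imp fun τ hτ => semLevel_mono L Model Θ Fr S f1 f2 hij' τ hτ
      rw [show buildF L Model Θ Fr S f1 f2 (j+1) X = buildF L Model Θ Fr S f1 f2 j X from by
        rw [buildF]; exact if_pos hXj]
      exact ih hij' X hX
    · rw [le_antisymm hij h]

lemma phiT_eq {i : ℕ} {τ : L.T} {X : (M : {x // x ∈ S}) → Θ.V M.val}
    (hX : X ∈ semLevel L Model Θ Fr S f1 f2 i τ) :
    phiT L Model Θ Fr S f1 f2 X = buildF L Model Θ Fr S f1 f2 i X := by
  have h : ∃ i, ∃ τ, X ∈ semLevel L Model Θ Fr S f1 f2 i τ := ⟨i, τ, hX⟩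
  rw [phiT, dif_pos h]
  have hfind := (Nat.find_spec h)
  exact (buildF_stab L Model Θ Fr S f1 f2 (Nat.find_le ⟨τ, hX⟩) X hfind).symm

/-- Every element of a level set is the semantics of a well-typed formula of that type. -/
lemma semLevel_real
    (hf1 : ∀ (M : Model) (o : L.Op1) (φ : Fm L), φ.WT → φ.typeOf ∈ L.arg1 o →
      Θ.sem M (.op1 o φ) = f1 M o (Θ.sem M φ))
    (hf2 : ∀ (M : Model) (o : L.Op2) (φ ψ : Fm L), φ.WT → ψ.WT →
      φ.typeOf ∈ L.arg21 o → ψ.typeOf ∈ L.arg22 o →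
      Θ.sem M (.op2 o φ ψ) = f2 M o (Θ.sem M φ) (Θ.sem M ψ)) :
    ∀ (i : ℕ) (τ : L.T) (X : (M : {x // x ∈ S}) → Θ.V M.val),
      X ∈ semLevel L Model Θ Fr S f1 f2 i τ →
      ∃ φ : Fm L, φ.WT ∧ φ.typeOf = τ ∧ ∀ M : {x // x ∈ S}, Θ.sem M.val φ = X M := by
  intro i
  induction i with
  | zero =>
    rintro τ X ⟨o, _, hty, rfl⟩
    exact ⟨.op0 o, trivial, hty, fun M => rfl⟩
  | succ i ih =>
    intro τ X hX
    rw [semLevel] at hX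
    rcases hX with (hX | ⟨o, ho, hty, τ', hτ', Y, hY, rfl⟩) |
      ⟨o, ho, hty, τ1, hτ1, τ2, hτ2, Y1, hY1, Y2, hY2, rfl⟩
    · exact ih τ X hX
    · obtain ⟨φ, hwt, hto, hsem⟩ := ih τ' Y hY
      refine ⟨.op1 o φ, ⟨hwt, hto ▸ hτ'⟩, hty, fun M => ?_⟩
      rw [hf1 M.val o φ hwt (hto ▸ hτ'), hsem M]
    · obtain ⟨φ1, hwt1, hto1, hsem1⟩ := ih τ1 Y1 hY1
      obtain ⟨φ2, hwt2, hto2, hsem2⟩ := ih τ2 Y2 hY2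
      refine ⟨.op2 o φ1 φ2, ⟨hwt1, hwt2, hto1 ▸ hτ1, hto2 ▸ hτ2⟩, hty, fun M => ?_⟩
      rw [hf2 M.val o φ1 φ2 hwt1 hwt2 (hto1 ▸ hτ1) (hto2 ▸ hτ2), hsem1 M, hsem2 M]

/-- With a nonempty model set, the type of a level-set element is unique. -/
lemma semLevel_typeUnique (hS : S.Nonempty)
    (hf1 : ∀ (M : Model) (o : L.Op1) (φ : Fm L), φ.WT → φ.typeOf ∈ L.arg1 o →
      Θ.sem M (.op1 o φ) = f1 M o (Θ.sem M φ))
    (hf2 : ∀ (M : Model) (o : L.Op2) (φ ψ : Fm L), φ.WT → ψ.WT →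
      φ.typeOf ∈ L.arg21 o → ψ.typeOf ∈ L.arg22 o →
      Θ.sem M (.op2 o φ ψ) = f2 M o (Θ.sem M φ) (Θ.sem M ψ))
    {i j : ℕ} {τ τ' : L.T} {X : (M : {x // x ∈ S}) → Θ.V M.val}
    (hX : X ∈ semLevel L Model Θ Fr S f1 f2 i τ)
    (hX' : X ∈ semLevel L Model Θ Fr S f1 f2 j τ') : τ = τ' := by
  obtain ⟨M0, hM0⟩ := hS
  obtain ⟨φ, hwt, hto, hsem⟩ := semLevel_real L Model Θ Fr S f1 f2 hf1 hf2 i τ X hX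
  obtain ⟨φ', hwt', hto', hsem'⟩ := semLevel_real L Model Θ Fr S f1 f2 hf1 hf2 j τ' X hX'
  by_contra hne
  have h1 : X ⟨M0, hM0⟩ ∈ Θ.SEM M0 τ := by
    rw [← hsem ⟨M0, hM0⟩, ← hto]; exact Θ.typed M0 φ hwt
  have h2 : X ⟨M0, hM0⟩ ∈ Θ.SEM M0 τ' := by
    rw [← hsem' ⟨M0, hM0⟩, ← hto']; exact Θ.typed M0 φ' hwt'
  exact Set.disjoint_left.mp (Θ.disj_SEM M0 τ τ' hne) h1 h2

/-- The main invariant of `phiT` on the level sets. -/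
lemma phiT_good (hS : S.Nonempty)
    (hf1 : ∀ (M : Model) (o : L.Op1) (φ : Fm L), φ.WT → φ.typeOf ∈ L.arg1 o →
      Θ.sem M (.op1 o φ) = f1 M o (Θ.sem M φ))
    (hf2 : ∀ (M : Model) (o : L.Op2) (φ ψ : Fm L), φ.WT → ψ.WT →
      φ.typeOf ∈ L.arg21 o → ψ.typeOf ∈ L.arg22 o →
      Θ.sem M (.op2 o φ ψ) = f2 M o (Θ.sem M φ) (Θ.sem M ψ)) :
    ∀ (i : ℕ) (τ : L.T) (X : (M : {x // x ∈ S}) → Θ.V M.val),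
      X ∈ semLevel L Model Θ Fr S f1 f2 i τ →
      IsFmOf Fr (phiT L Model Θ Fr S f1 f2 X) ∧
      (fun M : {x // x ∈ S} => Θ.sem M.val (phiT L Model Θ Fr S f1 f2 X)) = X ∧
      (phiT L Model Θ Fr S f1 f2 X).typeOf = τ ∧
      ∀ ψ ∈ Fm.Sub (phiT L Model Θ Fr S f1 f2 X),
        (fun M : {x // x ∈ S} => Θ.sem M.val ψ) ∈ semFix L Model Θ Fr S f1 f2 ∧
        ψ = phiT L Model Θ Fr S f1 f2 (fun M : {x // x ∈ S} => Θ.sem M.val ψ) := by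
  intro i
  induction i with
  | zero =>
    intro τ X hX
    have e0 : phiT L Model Θ Fr S f1 f2 X = buildF L Model Θ Fr S f1 f2 0 X := phiT_eq _ _ _ _ _ _ _ hX
    obtain ⟨o, ho, hty, hXeq⟩ := hX
    have hcond : ∃ o, o ∈ Fr.F0 ∧ X = fun M : {x // x ∈ S} => Θ.sem M.val (.op0 o) := ⟨o, ho, hXeq⟩
    have e : phiT L Model Θ Fr S f1 f2 X = .op0 hcond.choose := by
      rw [e0, buildF, dif_pos hcond]
    obtain ⟨hoc, hXc⟩ := hcond.choose_spec
    have hsem : (fun M : {x // x ∈ S} => Θ.sem M.val (phiT L Model Θ Fr S f1 f2 X)) = X := by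
      rw [e]; exact hXc.symm
    have hX' : X ∈ semLevel L Model Θ Fr S f1 f2 0 τ := ⟨o, ho, hty, hXeq⟩
    have hXc' : X ∈ semLevel L Model Θ Fr S f1 f2 0 (L.ty0 hcond.choose) :=
      ⟨hcond.choose, hoc, rfl, hXc⟩
    have hτ : (phiT L Model Θ Fr S f1 f2 X).typeOf = τ := by
      rw [e]
      exact semLevel_typeUnique L Model Θ Fr S f1 f2 hS hf1 hf2 hXc' hX'
    refine ⟨⟨by rw [e]; trivial, by rw [e]; exact hoc⟩, hsem, hτ, ?_⟩
    intro ψ hψ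
    rw [e] at hψ
    have : ψ = phiT L Model Θ Fr S f1 f2 X := by
      rw [e]; simpa [Fm.Sub] using hψ
    subst this
    refine ⟨?_, ?_⟩
    · rw [hsem]
      exact Set.mem_iUnion.mpr ⟨τ, Set.mem_iUnion.mpr ⟨0, hX'⟩⟩
    · rw [hsem]
  | succ i ih =>
    intro τ X hX
    by_cases h0 : ∃ τ0, X ∈ semLevel L Model Θ Fr S f1 f2 i τ0
    · obtain ⟨τ0, hX0⟩ := h0
      obtain ⟨hfm, hsem, hty, hsub⟩ := ih τ0 X hX0
      refine ⟨hfm, hsem, ?_, hsub⟩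
      rw [hty]
      exact semLevel_typeUnique L Model Θ Fr S f1 f2 hS hf1 hf2 hX0 hX
    · have e0 : phiT L Model Θ Fr S f1 f2 X = buildF L Model Θ Fr S f1 f2 (i+1) X :=
        phiT_eq _ _ _ _ _ _ _ hX
      by_cases h1 : ∃ p : L.Op1 × ((M : {x // x ∈ S}) → Θ.V M.val),
          p.1 ∈ Fr.F1 ∧ (∃ τ', τ' ∈ L.arg1 p.1 ∧ p.2 ∈ semLevel L Model Θ Fr S f1 f2 i τ') ∧
          X = fun M : {x // x ∈ S} => f1 M.val p.1 (p.2 M)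
      · have e : phiT L Model Θ Fr S f1 f2 X =
            .op1 h1.choose.1 (buildF L Model Θ Fr S f1 f2 i h1.choose.2) := by
          rw [e0, buildF, if_neg h0, dif_pos h1]
        obtain ⟨hoF, ⟨τ', hτ', hY⟩, hXeq⟩ := h1.choose_spec
        have eY : buildF L Model Θ Fr S f1 f2 i h1.choose.2 =
            phiT L Model Θ Fr S f1 f2 h1.choose.2 := (phiT_eq _ _ _ _ _ _ _ hY).symm
        rw [eY] at e
        obtain ⟨⟨hwtY, hifY⟩, hsemY, htyY, hsubY⟩ := ih τ' h1.choose.2 hY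
        have hargY : (phiT L Model Θ Fr S f1 f2 h1.choose.2).typeOf ∈ L.arg1 h1.choose.1 := by
          rw [htyY]; exact hτ'
        have hsem : (fun M : {x // x ∈ S} => Θ.sem M.val (phiT L Model Θ Fr S f1 f2 X)) = X := by
          rw [e]
          funext M
          rw [hf1 M.val h1.choose.1 _ hwtY hargY]
          rw [show Θ.sem M.val (phiT L Model Θ Fr S f1 f2 h1.choose.2) = h1.choose.2 M from
            congrFun hsemY M]
          exact (congrFun hXeq M).symm
        have hXmem : X ∈ semLevel L Model Θ Fr S f1 f2 (i+1) (L.ty1 h1.choose.1) :=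
          Or.inl (Or.inr ⟨h1.choose.1, hoF, rfl, τ', hτ', h1.choose.2, hY, hXeq⟩)
        have hτ : (phiT L Model Θ Fr S f1 f2 X).typeOf = τ := by
          rw [e]
          exact semLevel_typeUnique L Model Θ Fr S f1 f2 hS hf1 hf2 hXmem hX
        refine ⟨⟨by rw [e]; exact ⟨hwtY, hargY⟩, by rw [e]; exact ⟨hoF, hifY⟩⟩, hsem, hτ, ?_⟩
        intro ψ hψ
        rw [e] at hψ
        rcases hψ with hψ | hψ
        · subst hψ
          rw [← e]
          refine ⟨?_, ?_⟩
          · rw [hsem]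
            exact Set.mem_iUnion.mpr ⟨τ, Set.mem_iUnion.mpr ⟨i+1, hX⟩⟩
          · rw [hsem]
        · exact hsubY ψ hψ
      · have h2 : ∃ p : L.Op2 × ((M : {x // x ∈ S}) → Θ.V M.val) ×
              ((M : {x // x ∈ S}) → Θ.V M.val),
            p.1 ∈ Fr.F2 ∧ (∃ τ1, τ1 ∈ L.arg21 p.1 ∧ p.2.1 ∈ semLevel L Model Θ Fr S f1 f2 i τ1) ∧
            (∃ τ2, τ2 ∈ L.arg22 p.1 ∧ p.2.2 ∈ semLevel L Model Θ Fr S f1 f2 i τ2) ∧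
            X = fun M : {x // x ∈ S} => f2 M.val p.1 (p.2.1 M) (p.2.2 M) := by
          have hX' := hX
          rw [semLevel] at hX'
          rcases hX' with (hm | ⟨o, ho, hty, τ', hτ', Y, hY, hXeq⟩) |
            ⟨o, ho, hty, τ1, hτ1, τ2, hτ2, Y1, hY1, Y2, hY2, hXeq⟩
          · exact absurd ⟨τ, hm⟩ h0
          · exact absurd ⟨⟨o, Y⟩, ho, ⟨τ', hτ', hY⟩, hXeq⟩ h1
          · exact ⟨⟨o, Y1, Y2⟩, ho, ⟨τ1, hτ1, hY1⟩, ⟨τ2, hτ2, hY2⟩, hXeq⟩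
        have e : phiT L Model Θ Fr S f1 f2 X =
            .op2 h2.choose.1 (buildF L Model Θ Fr S f1 f2 i h2.choose.2.1)
              (buildF L Model Θ Fr S f1 f2 i h2.choose.2.2) := by
          rw [e0, buildF, if_neg h0, dif_neg h1, dif_pos h2]
        obtain ⟨hoF, ⟨τ1, hτ1, hY1⟩, ⟨τ2, hτ2, hY2⟩, hXeq⟩ := h2.choose_spec
        have eY1 : buildF L Model Θ Fr S f1 f2 i h2.choose.2.1 =
            phiT L Model Θ Fr S f1 f2 h2.choose.2.1 := (phiT_eq _ _ _ _ _ _ _ hY1).symm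
        have eY2 : buildF L Model Θ Fr S f1 f2 i h2.choose.2.2 =
            phiT L Model Θ Fr S f1 f2 h2.choose.2.2 := (phiT_eq _ _ _ _ _ _ _ hY2).symm
        rw [eY1, eY2] at e
        obtain ⟨⟨hwt1, hif1⟩, hsem1, hty1, hsub1⟩ := ih τ1 h2.choose.2.1 hY1
        obtain ⟨⟨hwt2, hif2⟩, hsem2, hty2, hsub2⟩ := ih τ2 h2.choose.2.2 hY2
        have harg1 : (phiT L Model Θ Fr S f1 f2 h2.choose.2.1).typeOf ∈ L.arg21 h2.choose.1 := by
          rw [hty1]; exact hτ1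
        have harg2 : (phiT L Model Θ Fr S f1 f2 h2.choose.2.2).typeOf ∈ L.arg22 h2.choose.1 := by
          rw [hty2]; exact hτ2
        have hsem : (fun M : {x // x ∈ S} => Θ.sem M.val (phiT L Model Θ Fr S f1 f2 X)) = X := by
          rw [e]
          funext M
          rw [hf2 M.val h2.choose.1 _ _ hwt1 hwt2 harg1 harg2]
          rw [show Θ.sem M.val (phiT L Model Θ Fr S f1 f2 h2.choose.2.1) = h2.choose.2.1 M from
            congrFun hsem1 M]
          rw [show Θ.sem M.val (phiT L Model Θ Fr S f1 f2 h2.choose.2.2) = h2.choose.2.2 M from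
            congrFun hsem2 M]
          exact (congrFun hXeq M).symm
        have hXmem : X ∈ semLevel L Model Θ Fr S f1 f2 (i+1) (L.ty2 h2.choose.1) :=
          Or.inr ⟨h2.choose.1, hoF, rfl, τ1, hτ1, τ2, hτ2, h2.choose.2.1, hY1,
            h2.choose.2.2, hY2, hXeq⟩
        have hτ : (phiT L Model Θ Fr S f1 f2 X).typeOf = τ := by
          rw [e]
          exact semLevel_typeUnique L Model Θ Fr S f1 f2 hS hf1 hf2 hXmem hX
        refine ⟨⟨by rw [e]; exact ⟨hwt1, hwt2, harg1, harg2⟩,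
          by rw [e]; exact ⟨hoF, hif1, hif2⟩⟩, hsem, hτ, ?_⟩
        intro ψ hψ
        rw [e] at hψ
        rcases hψ with hψ | hψ | hψ
        · subst hψ
          rw [← e]
          refine ⟨?_, ?_⟩
          · rw [hsem]
            exact Set.mem_iUnion.mpr ⟨τ, Set.mem_iUnion.mpr ⟨i+1, hX⟩⟩
          · rw [hsem]
        · exact hsub1 ψ hψ
        · exact hsub2 ψ hψ

/-- Every element of a level set forces the fragment to have a nullary operator. -/
lemma semLevel_F0_nonempty :
    ∀ (i : ℕ) (τ : L.T) (X : (M : {x // x ∈ S}) → Θ.V M.val),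
      X ∈ semLevel L Model Θ Fr S f1 f2 i τ → ∃ o, o ∈ Fr.F0 := by
  intro i
  induction i with
  | zero => rintro τ X ⟨o, ho, _⟩; exact ⟨o, ho⟩
  | succ i ih =>
    intro τ X hX
    rw [semLevel] at hX
    rcases hX with (hX | ⟨o, ho, hty, τ', hτ', Y, hY, _⟩) |
      ⟨o, ho, hty, τ1, hτ1, τ2, hτ2, Y1, hY1, Y2, hY2, _⟩
    · exact ih τ X hX
    · exact ih τ' Y hY
    · exact ih τ1 Y1 hY1

/-- `semFix` is finite. -/
lemma semFix_finite
    (hf1 : ∀ (M : Model) (o : L.Op1) (φ : Fm L), φ.WT → φ.typeOf ∈ L.arg1 o →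
      Θ.sem M (.op1 o φ) = f1 M o (Θ.sem M φ))
    (hf2 : ∀ (M : Model) (o : L.Op2) (φ ψ : Fm L), φ.WT → ψ.WT →
      φ.typeOf ∈ L.arg21 o → ψ.typeOf ∈ L.arg22 o →
      Θ.sem M (.op2 o φ ψ) = f2 M o (Θ.sem M φ) (Θ.sem M ψ)) :
    (semFix L Model Θ Fr S f1 f2).Finite := by
  have hsub : semFix L Model Θ Fr S f1 f2 ⊆
      ⋃ τ : L.T, Set.pi Set.univ (fun M : {x // x ∈ S} => Θ.SEM M.val τ) := by
    intro X hX
    obtain ⟨τ, i, hX⟩ := by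
      simpa [semFix, Set.mem_iUnion] using hX
    obtain ⟨φ, hwt, hto, hsem⟩ := semLevel_real L Model Θ Fr S f1 f2 hf1 hf2 i τ X hX
    refine Set.mem_iUnion.mpr ⟨τ, ?_⟩
    intro M _
    rw [← hsem M, ← hto]
    exact Θ.typed M.val φ hwt
  refine Set.Finite.subset ?_ hsub
  refine Set.finite_iUnion fun τ => ?_
  exact Set.Finite.pi fun M => Θ.finite_SEM M.val τ

/-- Subformula sets are finite. -/
lemma sub_finite {L : AbsLogic} : ∀ φ : Fm L, (Fm.Sub φ).Finite
  | .op0 o => Set.finite_singleton _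
  | .op1 o φ => (sub_finite φ).insert _
  | .op2 o φ ψ => (((sub_finite φ).union (sub_finite ψ)).insert _)

end Aux

/-- **Lemma.** There is a function `φΘ` from the fixed-point set `SEM^{L'}_S` to
fragment formulas such that for every `X ∈ SEM^{L'}_S`: (1) `semΘ (φΘ X) = X`;
(2) every subformula `ψ` of `φΘ X` satisfies `ψ = φΘ (semΘ ψ)`.  Consequently
`semΘ` is injective on `Sub (φΘ X)` and `sz (φΘ X) ≤ |SEM^{L'}_S|`. -/
theorem exists_formula_of_semFix
    (L : AbsLogic) (Model : Type) (Θ : IndPair L Model) (Fr : Fragment L)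
    (S : Finset Model)
    (f1 : (M : Model) → L.Op1 → Θ.V M → Θ.V M)
    (f2 : (M : Model) → L.Op2 → Θ.V M → Θ.V M → Θ.V M)
    (hf1 : ∀ (M : Model) (o : L.Op1) (φ : Fm L), φ.WT → φ.typeOf ∈ L.arg1 o →
      Θ.sem M (.op1 o φ) = f1 M o (Θ.sem M φ))
    (hf2 : ∀ (M : Model) (o : L.Op2) (φ ψ : Fm L), φ.WT → ψ.WT →
      φ.typeOf ∈ L.arg21 o → ψ.typeOf ∈ L.arg22 o →
      Θ.sem M (.op2 o φ ψ) = f2 M o (Θ.sem M φ) (Θ.sem M ψ)) :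
    ∃ φΘ : ((M : {x // x ∈ S}) → Θ.V M.val) → Fm L,
      ∀ X ∈ semFix L Model Θ Fr S f1 f2,
        IsFmOf Fr (φΘ X) ∧
        (fun M : {x // x ∈ S} => Θ.sem M.val (φΘ X)) = X ∧
        (∀ ψ ∈ Fm.Sub (φΘ X), ψ = φΘ (fun M : {x // x ∈ S} => Θ.sem M.val ψ)) ∧
        Set.InjOn (fun (ψ : Fm L) (M : {x // x ∈ S}) => Θ.sem M.val ψ)
          (Fm.Sub (φΘ X)) ∧
        Fm.sz (φΘ X) ≤ (semFix L Model Θ Fr S f1 f2).ncard := by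
  classical
  have hfin := semFix_finite L Model Θ Fr S f1 f2 hf1 hf2
  by_cases hS : S.Nonempty
  · refine ⟨phiT L Model Θ Fr S f1 f2, ?_⟩
    intro X hX
    obtain ⟨τ, i, hXl⟩ : ∃ τ i, X ∈ semLevel L Model Θ Fr S f1 f2 i τ := by
      simpa [semFix, Set.mem_iUnion] using hX
    obtain ⟨hfm, hsem, _, hsub⟩ := phiT_good L Model Θ Fr S f1 f2 hS hf1 hf2 i τ X hXl
    have hinj : Set.InjOn (fun (ψ : Fm L) (M : {x // x ∈ S}) => Θ.sem M.val ψ)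
        (Fm.Sub (phiT L Model Θ Fr S f1 f2 X)) := by
      intro ψ1 h1 ψ2 h2 heq
      rw [(hsub ψ1 h1).2, (hsub ψ2 h2).2]
      exact congrArg _ heq
    refine ⟨hfm, hsem, fun ψ hψ => (hsub ψ hψ).2, hinj, ?_⟩
    have himg : (fun (ψ : Fm L) (M : {x // x ∈ S}) => Θ.sem M.val ψ) ''
        Fm.Sub (phiT L Model Θ Fr S f1 f2 X) ⊆ semFix L Model Θ Fr S f1 f2 := by
      rintro _ ⟨ψ, hψ, rfl⟩
      exact (hsub ψ hψ).1
    calc Fm.sz (phiT L Model Θ Fr S f1 f2 X)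
        = ((fun (ψ : Fm L) (M : {x // x ∈ S}) => Θ.sem M.val ψ) ''
            Fm.Sub (phiT L Model Θ Fr S f1 f2 X)).ncard :=
          (Set.ncard_image_of_injOn hinj).symm
      _ ≤ _ := Set.ncard_le_ncard himg hfin
  · refine ⟨fun _ => if h : ∃ o, o ∈ Fr.F0 then .op0 h.choose
      else .op0 (Classical.choice L.neOp0), ?_⟩
    intro X hX
    obtain ⟨τ, i, hXl⟩ : ∃ τ i, X ∈ semLevel L Model Θ Fr S f1 f2 i τ := by
      simpa [semFix, Set.mem_iUnion] using hX
    have h : ∃ o, o ∈ Fr.F0 := semLevel_F0_nonempty L Model Θ Fr S f1 f2 i τ X hXl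
    simp only [dif_pos h]
    have hfun : ∀ (Y Z : (M : {x // x ∈ S}) → Θ.V M.val), Y = Z :=
      fun Y Z => funext fun M => absurd ⟨M.1, M.2⟩ hS
    refine ⟨⟨trivial, h.choose_spec⟩, hfun _ _, ?_, ?_, ?_⟩
    · intro ψ hψ
      have hψe : ψ = Fm.op0 h.choose := by simpa [Fm.Sub] using hψ
      subst hψe
      simp only [dif_pos h]
    · intro ψ1 h1 ψ2 h2 _
      have e1 : ψ1 = Fm.op0 h.choose := by simpa [Fm.Sub] using h1
      have e2 : ψ2 = Fm.op0 h.choose := by simpa [Fm.Sub] using h2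
      rw [e1, e2]
    · have hsz : Fm.sz (Fm.op0 h.choose : Fm L) = 1 := by simp [Fm.sz, Fm.Sub]
      rw [hsz]
      exact (Set.ncard_pos hfin).mpr ⟨X, hX⟩
end

section
/- Let L' be any fragment of ML(Prop,Act) and let 𝒫, 𝒩 be finite sets of Kripke structures over (Prop, Act). If there is a (𝒫,𝒩)-separating L'-formula, then there is one of size at most 2^n, where n := Σ_{K ∈ 𝒫∪𝒩} |Q_K| is the total number of states of the structures in the sample. -/
open scoped Classical

/-- Formulas of modal logic `ML(Prop, Act)`:
`φ ::= p | ¬φ | φ∨φ | φ∧φ | ⟨a⟩^{≥k}φ (k ≥ 1) | [a]φ`. -/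
inductive MLFormula (P A : Type) : Type
  | atom : P → MLFormula P A
  | not : MLFormula P A → MLFormula P A
  | or : MLFormula P A → MLFormula P A → MLFormula P A
  | and : MLFormula P A → MLFormula P A → MLFormula P A
  | dia : A → ℕ+ → MLFormula P A → MLFormula P A
  | box : A → MLFormula P A → MLFormula P A

/-- A Kripke structure over `(P, A)`: a finite non-empty set of states, a
non-empty set of initial states, transitions labelled by actions, and a
labelling of states by propositions. -/
structure Kripke (P A : Type) where
  Q : Type
  [finQ : Fintype Q]
  neQ : Nonempty Q
  I : Set Q
  neI : I.Nonempty
  δ : Q → A → Set Q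
  π : Q → Set P

attribute [instance] Kripke.finQ

/-- Satisfaction of a modal formula at a state of a Kripke structure. -/
def MLsat {P A : Type} (K : Kripke P A) : MLFormula P A → K.Q → Prop
  | .atom p, q => p ∈ K.π q
  | .not φ, q => ¬ MLsat K φ q
  | .or φ ψ, q => MLsat K φ q ∨ MLsat K ψ q
  | .and φ ψ, q => MLsat K φ q ∧ MLsat K ψ q
  | .dia a k φ, q => (k : ℕ) ≤ (K.δ q a ∩ {q' | MLsat K φ q'}).ncard
  | .box a φ, q => ∀ q' ∈ K.δ q a, MLsat K φ q'

/-- `K ⊨ φ`: every initial state satisfies `φ`. -/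
def MLsatK {P A : Type} (K : Kripke P A) (φ : MLFormula P A) : Prop :=
  ∀ q ∈ K.I, MLsat K φ q

/-- The semantic value of a formula in `K`: the set of states satisfying it. -/
def semK {P A : Type} (K : Kripke P A) (φ : MLFormula P A) : Set K.Q :=
  {q | MLsat K φ q}

/-- A fragment of `ML(Prop, Act)`: a subset of the operators
(atomic propositions `p`, `¬`, `∨`, `∧`, `⟨a⟩^{≥k}`, `[a]`). -/
structure MLFragment (P A : Type) where
  atoms : Set P
  hasNot : Prop
  hasOr : Prop
  hasAnd : Prop
  dias : Set (A × ℕ+)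
  boxes : Set A

/-- A formula belongs to the fragment if it is built using only its operators. -/
def MLFragment.Mem {P A : Type} (F : MLFragment P A) : MLFormula P A → Prop
  | .atom p => p ∈ F.atoms
  | .not φ => F.hasNot ∧ F.Mem φ
  | .or φ ψ => F.hasOr ∧ F.Mem φ ∧ F.Mem ψ
  | .and φ ψ => F.hasAnd ∧ F.Mem φ ∧ F.Mem ψ
  | .dia a k φ => (a, k) ∈ F.dias ∧ F.Mem φ
  | .box a φ => a ∈ F.boxes ∧ F.Mem φ

/-- The set of subformulas of a modal formula. -/
def MLSub {P A : Type} : MLFormula P A → Set (MLFormula P A)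
  | .atom p => {.atom p}
  | .not φ => insert (.not φ) (MLSub φ)
  | .or φ ψ => insert (.or φ ψ) (MLSub φ ∪ MLSub ψ)
  | .and φ ψ => insert (.and φ ψ) (MLSub φ ∪ MLSub ψ)
  | .dia a k φ => insert (.dia a k φ) (MLSub φ)
  | .box a φ => insert (.box a φ) (MLSub φ)

/-- The (syntax-DAG) size of a modal formula: its number of distinct subformulas. -/
noncomputable def MLsz {P A : Type} (φ : MLFormula P A) : ℕ := (MLSub φ).ncard

/-! Take a separating formula `φ` of minimal size. A subformula `γ` of `φ` determines the vector
`(semK K γ)_K` of its truth sets over the sample, and there are only `2^n` such vectors. So if `φ`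
had more than `2^n` subformulas, two distinct ones `α`, `β` would agree on every structure of the
sample, and they cannot be subformulas of each other, so we may assume `β` is not a subformula of
`α`. Replacing `β` by `α` everywhere in `φ` stays in the fragment, keeps `φ` separating, creates no
new subformula and loses `β`: a smaller separating formula. -/

namespace MLFormula

variable {P A : Type}

theorem mem_MLSub_self (φ : MLFormula P A) : φ ∈ MLSub φ := by
  cases φ <;> simp [MLSub]

theorem MLSub_finite (φ : MLFormula P A) : (MLSub φ).Finite := by
  induction φ <;> simp_all [MLSub]

theorem mem_MLSub_trans {γ ψ φ : MLFormula P A} (h₁ : γ ∈ MLSub ψ) (h₂ : ψ ∈ MLSub φ) :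
    γ ∈ MLSub φ := by
  induction φ <;>
    simp only [MLSub, Set.mem_insert_iff, Set.mem_union, Set.mem_singleton_iff] at h₂ ⊢
  all_goals grind [MLSub]

theorem eq_or_sizeOf_lt_of_mem_MLSub {γ φ : MLFormula P A} (h : γ ∈ MLSub φ) :
    γ = φ ∨ sizeOf γ < sizeOf φ := by
  induction φ <;>
    simp only [MLSub, Set.mem_insert_iff, Set.mem_union, Set.mem_singleton_iff] at h
  all_goals grind

theorem eq_of_mem_MLSub_of_mem_MLSub {α β : MLFormula P A} (h₁ : α ∈ MLSub β)
    (h₂ : β ∈ MLSub α) : α = β := by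
  rcases eq_or_sizeOf_lt_of_mem_MLSub h₁ with h | h₁
  · exact h
  rcases eq_or_sizeOf_lt_of_mem_MLSub h₂ with h | h₂
  · exact h.symm
  omega

theorem _root_.MLFragment.Mem.of_mem_MLSub {F : MLFragment P A} {γ φ : MLFormula P A}
    (hφ : F.Mem φ) (h : γ ∈ MLSub φ) : F.Mem γ := by
  induction φ <;>
    simp only [MLSub, Set.mem_insert_iff, Set.mem_union, Set.mem_singleton_iff] at h
  all_goals grind [MLFragment.Mem]

noncomputable def replace (β α φ : MLFormula P A) : MLFormula P A :=
  if φ = β then α else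
    match φ with
    | atom p => atom p
    | not φ => not (replace β α φ)
    | or φ ψ => or (replace β α φ) (replace β α ψ)
    | and φ ψ => and (replace β α φ) (replace β α ψ)
    | dia a k φ => dia a k (replace β α φ)
    | box a φ => box a (replace β α φ)

theorem replace_self (β α : MLFormula P A) : replace β α β = α := by
  unfold replace; simp

theorem replace_of_not_mem_MLSub {β : MLFormula P A} (α : MLFormula P A) {φ : MLFormula P A}
    (h : β ∉ MLSub φ) : replace β α φ = φ := by
  induction φ <;> unfold replace <;> grind [MLSub, mem_MLSub_self]

theorem mem_MLSub_replace {β α φ γ : MLFormula P A} (h : γ ∈ MLSub (replace β α φ)) :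
    γ ∈ MLSub α ∨ ∃ δ ∈ MLSub φ, replace β α δ = γ := by
  induction φ generalizing γ <;> rw [replace] at h <;> split_ifs at h with hφ
  all_goals first
    | exact Or.inl h
    | (simp only [MLSub, Set.mem_insert_iff, Set.mem_union, Set.mem_singleton_iff] at h ⊢
       grind [replace])

theorem _root_.MLFragment.Mem.replace {F : MLFragment P A} {β α φ : MLFormula P A}
    (hφ : F.Mem φ) (hα : F.Mem α) : F.Mem (replace β α φ) := by
  induction φ <;> unfold MLFormula.replace <;> split_ifs <;> grind [MLFragment.Mem]

theorem MLsat_replace_iff {K : Kripke P A} {β α : MLFormula P A}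
    (hαβ : ∀ q, MLsat K α q ↔ MLsat K β q) (φ : MLFormula P A) (q : K.Q) :
    MLsat K (replace β α φ) q ↔ MLsat K φ q := by
  induction φ generalizing q <;> unfold replace <;> split_ifs with hφ
  all_goals first
    | (subst hφ; exact hαβ q)
    | simp_all only [MLsat]

theorem MLsz_replace_lt {β α φ : MLFormula P A} (hα : α ∈ MLSub φ) (hβ : β ∈ MLSub φ)
    (hβα : β ∉ MLSub α) : MLsz (replace β α φ) < MLsz φ := by
  have hsubα : ∀ γ ∈ MLSub α, γ ∈ replace β α '' (MLSub φ \ {β}) := fun γ hγ =>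
    ⟨γ, ⟨mem_MLSub_trans hγ hα, fun h => hβα (h ▸ hγ)⟩,
      replace_of_not_mem_MLSub α fun h => hβα (mem_MLSub_trans h hγ)⟩
  have hsub : MLSub (replace β α φ) ⊆ replace β α '' (MLSub φ \ {β}) := by
    intro γ hγ
    rcases mem_MLSub_replace hγ with hγ | ⟨δ, hδ, rfl⟩
    · exact hsubα γ hγ
    by_cases hδβ : δ = β
    · rw [hδβ, replace_self]
      exact hsubα α (mem_MLSub_self α)
    · exact ⟨δ, ⟨hδ, hδβ⟩, rfl⟩
  have hfin := MLSub_finite φ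
  calc MLsz (replace β α φ) ≤ (replace β α '' (MLSub φ \ {β})).ncard :=
        Set.ncard_le_ncard hsub (hfin.sdiff.image _)
    _ ≤ (MLSub φ \ {β}).ncard := Set.ncard_image_le hfin.sdiff
    _ < MLsz φ := Set.ncard_lt_ncard (Set.sdiff_singleton_ssubset.mpr hβ) hfin

theorem exists_ne_semK_eq_of_two_pow_lt (s : Finset (Kripke P A)) {φ : MLFormula P A}
    (h : 2 ^ ∑ K ∈ s, Fintype.card K.Q < MLsz φ) :
    ∃ α ∈ MLSub φ, ∃ β ∈ MLSub φ, α ≠ β ∧ ∀ K ∈ s, semK K α = semK K β := by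
  have hcard : (Set.univ : Set (∀ K : s, Set K.1.Q)).ncard = 2 ^ ∑ K ∈ s, Fintype.card K.Q := by
    rw [Set.ncard_univ, Nat.card_eq_fintype_card, Fintype.card_pi]
    simp only [Fintype.card_set]
    rw [Finset.prod_coe_sort s (fun K => 2 ^ Fintype.card K.Q), Finset.prod_pow_eq_pow_sum]
  obtain ⟨α, hα, β, hβ, hne, hsem⟩ := Set.exists_ne_map_eq_of_ncard_lt_of_maps_to
    (hcard ▸ h) (f := fun γ (K : s) => semK K.1 γ) (fun _ _ => Set.mem_univ _)
  exact ⟨α, hα, β, hβ, hne, fun K hK => congrFun hsem ⟨K, hK⟩⟩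

def IsSeparating (F : MLFragment P A) (Pos Neg : Finset (Kripke P A)) (φ : MLFormula P A) :
    Prop :=
  F.Mem φ ∧ (∀ K ∈ Pos, MLsatK K φ) ∧ ∀ K ∈ Neg, ¬ MLsatK K φ

variable {F : MLFragment P A} {Pos Neg : Finset (Kripke P A)}

theorem IsSeparating.congr {φ ψ : MLFormula P A} (hφ : IsSeparating F Pos Neg φ) (hψ : F.Mem ψ)
    (hsat : ∀ K ∈ Pos ∪ Neg, ∀ q, MLsat K ψ q ↔ MLsat K φ q) : IsSeparating F Pos Neg ψ :=
  ⟨hψ, fun K hK q hq => (hsat K (Finset.mem_union_left _ hK) q).2 (hφ.2.1 K hK q hq),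
    fun K hK hKψ => hφ.2.2 K hK fun q hq =>
      (hsat K (Finset.mem_union_right _ hK) q).1 (hKψ q hq)⟩

theorem IsSeparating.exists_MLsz_lt {φ : MLFormula P A} (hφ : IsSeparating F Pos Neg φ)
    (hbig : 2 ^ ∑ K ∈ Pos ∪ Neg, Fintype.card K.Q < MLsz φ) :
    ∃ ψ, IsSeparating F Pos Neg ψ ∧ MLsz ψ < MLsz φ := by
  obtain ⟨α, hα, β, hβ, hne, hsem⟩ := exists_ne_semK_eq_of_two_pow_lt _ hbig
  wlog hβα : β ∉ MLSub α generalizing α β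
  · exact this β hβ α hα hne.symm (fun K hK => (hsem K hK).symm)
      fun hαβ => hne (eq_of_mem_MLSub_of_mem_MLSub hαβ (not_not.mp hβα))
  refine ⟨replace β α φ, hφ.congr (hφ.1.replace (hφ.1.of_mem_MLSub hα)) fun K hK =>
    MLsat_replace_iff (Set.ext_iff.mp (hsem K hK)) φ, MLsz_replace_lt hα hβ hβα⟩

theorem IsSeparating.exists_MLsz_le {φ : MLFormula P A} (hφ : IsSeparating F Pos Neg φ) :
    ∃ ψ, IsSeparating F Pos Neg ψ ∧ MLsz ψ ≤ 2 ^ ∑ K ∈ Pos ∪ Neg, Fintype.card K.Q := by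
  induction hm : MLsz φ using Nat.strong_induction_on generalizing φ with
  | _ m ih =>
    by_cases hle : MLsz φ ≤ 2 ^ ∑ K ∈ Pos ∪ Neg, Fintype.card K.Q
    · exact ⟨φ, hφ, hle⟩
    obtain ⟨ψ, hψ, hlt⟩ := hφ.exists_MLsz_lt (not_le.mp hle)
    exact ih _ (hm ▸ hlt) hψ rfl

end MLFormula

theorem ml_separating_size_general (P A : Type)
    (F : MLFragment P A) (Pos Neg : Finset (Kripke P A)) :
    (∃ φ : MLFormula P A, F.Mem φ ∧
        (∀ K ∈ Pos, MLsatK K φ) ∧ (∀ K ∈ Neg, ¬ MLsatK K φ)) →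
    ∃ φ : MLFormula P A, F.Mem φ ∧
        (∀ K ∈ Pos, MLsatK K φ) ∧ (∀ K ∈ Neg, ¬ MLsatK K φ) ∧
        MLsz φ ≤ 2 ^ (∑ K ∈ Pos ∪ Neg, Fintype.card K.Q) := by
  rintro ⟨φ, hφ⟩
  obtain ⟨ψ, ⟨hF, hPos, hNeg⟩, hsz⟩ := MLFormula.IsSeparating.exists_MLsz_le hφ
  exact ⟨ψ, hF, hPos, hNeg, hsz⟩

/-- **Corollary.** For any fragment of `ML(Prop, Act)` and any sample `(Pos, Neg)` of
Kripke structures: if some fragment formula separates the sample, then one of size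
at most `2^n` does, where `n` is the total number of states of the sample. -/
theorem ml_separating_size (P A : Type) (hP : Nonempty P) (hA : Nonempty A)
    (F : MLFragment P A) (Pos Neg : Finset (Kripke P A)) :
    (∃ φ : MLFormula P A, F.Mem φ ∧
        (∀ K ∈ Pos, MLsatK K φ) ∧ (∀ K ∈ Neg, ¬ MLsatK K φ)) →
    ∃ φ : MLFormula P A, F.Mem φ ∧
        (∀ K ∈ Pos, MLsatK K φ) ∧ (∀ K ∈ Neg, ¬ MLsatK K φ) ∧
        MLsz φ ≤ 2 ^ (∑ K ∈ Pos ∪ Neg, Fintype.card K.Q) :=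
  ml_separating_size_general P A F Pos Neg
end

section
/- Let L be any fragment of LTL(Prop) and let 𝒫, 𝒩 be finite sets of words in W(Prop). If there is a (𝒫,𝒩)-separating L-formula, then there is one of size at most 2^n, where n := Σ_{w ∈ 𝒫∪𝒩} ‖w‖. -/
open scoped Classical

/-- Formulas of linear temporal logic `LTL(Prop)`:
`φ ::= p | ¬φ | φ∨φ | φ∧φ | Xφ | Fφ | Gφ | φUφ`. -/
inductive LTL (P : Type) : Type
  | atom : P → LTL P
  | not : LTL P → LTL P
  | or : LTL P → LTL P → LTL P
  | and : LTL P → LTL P → LTL P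
  | next : LTL P → LTL P
  | fut : LTL P → LTL P
  | glob : LTL P → LTL P
  | untl : LTL P → LTL P → LTL P

/-- Satisfaction of an `LTL` formula on a finite word over `2^P`
(a list of sets of propositions). -/
def satFin {P : Type} : LTL P → List (Set P) → Prop
  | .atom p, w => p ∈ w.getD 0 ∅
  | .not φ, w => ¬ satFin φ w
  | .or φ ψ, w => satFin φ w ∨ satFin ψ w
  | .and φ ψ, w => satFin φ w ∧ satFin ψ w
  | .next φ, w => 2 ≤ w.length ∧ satFin φ w.tail
  | .fut φ, w => ∃ j < w.length, satFin φ (w.drop j)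
  | .glob φ, w => ∀ j < w.length, satFin φ (w.drop j)
  | .untl φ ψ, w => ∃ j < w.length, satFin ψ (w.drop j) ∧ ∀ k < j, satFin φ (w.drop k)

/-- Satisfaction of an `LTL` formula on an infinite word over `2^P`. -/
def satInf {P : Type} : LTL P → (ℕ → Set P) → Prop
  | .atom p, w => p ∈ w 0
  | .not φ, w => ¬ satInf φ w
  | .or φ ψ, w => satInf φ w ∨ satInf ψ w
  | .and φ ψ, w => satInf φ w ∧ satInf ψ w
  | .next φ, w => satInf φ (fun i => w (i + 1))
  | .fut φ, w => ∃ j, satInf φ (fun i => w (i + j))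
  | .glob φ, w => ∀ j, satInf φ (fun i => w (i + j))
  | .untl φ ψ, w => ∃ j, satInf ψ (fun i => w (i + j)) ∧ ∀ k < j, satInf φ (fun i => w (i + k))

/-- A model of `W(Prop)`: either a non-empty finite word `u` (when `v = []`) or
the ultimately periodic infinite word `u·v^ω` (when `v ≠ []`). -/
structure UPWord (P : Type) where
  u : List (Set P)
  v : List (Set P)
  ne : u ≠ [] ∨ v ≠ []

namespace UPWord

variable {P : Type}

/-- The letter of the infinite word `u·v^ω` at position `i`. -/
def letter (w : UPWord P) (i : ℕ) : Set P :=
  if i < w.u.length then w.u.getD i ∅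
  else w.v.getD ((i - w.u.length) % w.v.length) ∅

/-- Satisfaction of an `LTL` formula on a word of `W(Prop)`. -/
def sat (w : UPWord P) (φ : LTL P) : Prop :=
  if w.v = [] then satFin φ w.u else satInf φ w.letter

/-- `‖w‖`, the size of (the representation of) a word of `W(Prop)`. -/
def norm (w : UPWord P) : ℕ := w.u.length + w.v.length

end UPWord

/-- A fragment of `LTL(Prop)`: a subset of the operators
(atomic propositions, `¬`, `∨`, `∧`, `X`, `F`, `G`, `U`). -/
structure LTLFragment (P : Type) where
  atoms : Set P
  hasNot : Prop
  hasOr : Prop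
  hasAnd : Prop
  hasNext : Prop
  hasFut : Prop
  hasGlob : Prop
  hasUntil : Prop

/-- A formula belongs to the fragment if it is built using only its operators. -/
def LTLFragment.Mem {P : Type} (F : LTLFragment P) : LTL P → Prop
  | .atom p => p ∈ F.atoms
  | .not φ => F.hasNot ∧ F.Mem φ
  | .or φ ψ => F.hasOr ∧ F.Mem φ ∧ F.Mem ψ
  | .and φ ψ => F.hasAnd ∧ F.Mem φ ∧ F.Mem ψ
  | .next φ => F.hasNext ∧ F.Mem φ
  | .fut φ => F.hasFut ∧ F.Mem φ
  | .glob φ => F.hasGlob ∧ F.Mem φ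
  | .untl φ ψ => F.hasUntil ∧ F.Mem φ ∧ F.Mem ψ

/-- The set of subformulas of an `LTL` formula. -/
def LTLSub {P : Type} : LTL P → Set (LTL P)
  | .atom p => {.atom p}
  | .not φ => insert (.not φ) (LTLSub φ)
  | .or φ ψ => insert (.or φ ψ) (LTLSub φ ∪ LTLSub ψ)
  | .and φ ψ => insert (.and φ ψ) (LTLSub φ ∪ LTLSub ψ)
  | .next φ => insert (.next φ) (LTLSub φ)
  | .fut φ => insert (.fut φ) (LTLSub φ)
  | .glob φ => insert (.glob φ) (LTLSub φ)
  | .untl φ ψ => insert (.untl φ ψ) (LTLSub φ ∪ LTLSub ψ)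

/-- The (syntax-DAG) size of an `LTL` formula: its number of distinct subformulas. -/
noncomputable def LTLsz {P : Type} (φ : LTL P) : ℕ := (LTLSub φ).ncard

/-! Give each formula its footprint: its truth value at each of the ‖w‖ first suffixes of every
sample word `w` (later suffixes of `u·v^ω` repeat earlier ones), so there are `2^n` footprints.
Having the same footprint is a congruence for the LTL connectives, hence replacing a subformula
`b` by a subformula `a` with the same footprint does not change the truth value on the sample;
if `b` does not occur in `a`, this removes `b` from the syntax DAG. So a smallest separating
formula has subformulas with pairwise distinct footprints, and at most `2^n` of them. -/

section

variable {P : Type}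

lemma mem_LTLSub_self (φ : LTL P) : φ ∈ LTLSub φ := by
  cases φ <;> simp [LTLSub]

lemma LTLSub_subset_of_mem {φ ψ : LTL P} (h : ψ ∈ LTLSub φ) : LTLSub ψ ⊆ LTLSub φ := by
  induction φ with
  | atom p => simp_all [LTLSub]
  | not φ ih | next φ ih | fut φ ih | glob φ ih =>
    obtain rfl | h := h
    · rfl
    · exact (ih h).trans (Set.subset_insert _ _)
  | or φ₁ φ₂ ih₁ ih₂ | and φ₁ φ₂ ih₁ ih₂ | untl φ₁ φ₂ ih₁ ih₂ =>
    obtain rfl | h | h := h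
    · rfl
    · exact (ih₁ h).trans (Set.subset_union_left.trans (Set.subset_insert _ _))
    · exact (ih₂ h).trans (Set.subset_union_right.trans (Set.subset_insert _ _))

lemma finite_LTLSub (φ : LTL P) : (LTLSub φ).Finite := by
  induction φ <;> simp_all [LTLSub]

lemma sizeOf_le_of_mem_LTLSub {φ ψ : LTL P} (h : ψ ∈ LTLSub φ) : sizeOf ψ ≤ sizeOf φ := by
  induction φ with
  | atom p => simp_all [LTLSub]
  | not φ ih | next φ ih | fut φ ih | glob φ ih =>
    obtain rfl | h := h
    · rfl
    · grind [ih h]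
  | or φ₁ φ₂ ih₁ ih₂ | and φ₁ φ₂ ih₁ ih₂ | untl φ₁ φ₂ ih₁ ih₂ =>
    obtain rfl | h | h := h
    · rfl
    · grind [ih₁ h]
    · grind [ih₂ h]

lemma sizeOf_lt_of_mem_LTLSub {φ ψ : LTL P} (h : ψ ∈ LTLSub φ) (hne : ψ ≠ φ) :
    sizeOf ψ < sizeOf φ := by
  cases φ with
  | atom p => simp_all [LTLSub]
  | not φ | next φ | fut φ | glob φ =>
    obtain rfl | h := h
    · exact absurd rfl hne
    · grind [sizeOf_le_of_mem_LTLSub h]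
  | or φ₁ φ₂ | and φ₁ φ₂ | untl φ₁ φ₂ =>
    obtain rfl | h | h := h
    · exact absurd rfl hne
    · grind [sizeOf_le_of_mem_LTLSub h]
    · grind [sizeOf_le_of_mem_LTLSub h]

lemma LTLFragment.Mem.of_mem_LTLSub {F : LTLFragment P} {φ ψ : LTL P} (hφ : F.Mem φ)
    (h : ψ ∈ LTLSub φ) : F.Mem ψ := by
  induction φ with
  | atom p => simp_all [LTLSub]
  | not φ ih | next φ ih | fut φ ih | glob φ ih =>
    obtain rfl | h := h
    · exact hφ
    · exact ih hφ.2 h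
  | or φ₁ φ₂ ih₁ ih₂ | and φ₁ φ₂ ih₁ ih₂ | untl φ₁ φ₂ ih₁ ih₂ =>
    obtain rfl | h | h := h
    · exact hφ
    · exact ih₁ hφ.2.1 h
    · exact ih₂ hφ.2.2 h

namespace LTL

noncomputable def replace (old new φ : LTL P) : LTL P :=
  if φ = old then new else
    match φ with
    | .atom p => .atom p
    | .not ψ => .not (replace old new ψ)
    | .or ψ χ => .or (replace old new ψ) (replace old new χ)
    | .and ψ χ => .and (replace old new ψ) (replace old new χ)
    | .next ψ => .next (replace old new ψ)
    | .fut ψ => .fut (replace old new ψ)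
    | .glob ψ => .glob (replace old new ψ)
    | .untl ψ χ => .untl (replace old new ψ) (replace old new χ)

variable {old new : LTL P}

lemma replace_self : replace old new old = new := by
  rw [replace.eq_def, if_pos rfl]

lemma replace_eq_self_of_not_mem {φ : LTL P} (h : old ∉ LTLSub φ) : replace old new φ = φ := by
  have hφ : φ ≠ old := fun e => h (e ▸ mem_LTLSub_self φ)
  induction φ with
  | atom p => rw [replace, if_neg hφ]
  | not ψ ih | next ψ ih | fut ψ ih | glob ψ ih =>
    have hψ : old ∉ LTLSub ψ := fun hh => h (Or.inr hh)
    rw [replace, if_neg hφ, ih hψ (fun e => hψ (e ▸ mem_LTLSub_self ψ))]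
  | or ψ χ ih₁ ih₂ | and ψ χ ih₁ ih₂ | untl ψ χ ih₁ ih₂ =>
    have hψ : old ∉ LTLSub ψ := fun hh => h (Or.inr (Or.inl hh))
    have hχ : old ∉ LTLSub χ := fun hh => h (Or.inr (Or.inr hh))
    rw [replace, if_neg hφ, ih₁ hψ (fun e => hψ (e ▸ mem_LTLSub_self ψ)),
      ih₂ hχ (fun e => hχ (e ▸ mem_LTLSub_self χ))]

lemma LTLSub_replace_subset (φ : LTL P) :
    LTLSub (replace old new φ) ⊆ replace old new '' LTLSub φ ∪ LTLSub new := by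
  induction φ with
  | atom p =>
    rw [replace]; split_ifs with hφ
    · exact Set.subset_union_right
    · rintro τ rfl
      exact Or.inl ⟨_, mem_LTLSub_self _, by rw [replace, if_neg hφ]⟩
  | not ψ ih | next ψ ih | fut ψ ih | glob ψ ih =>
    rw [replace]; split_ifs with hφ
    · exact Set.subset_union_right
    · rintro τ (rfl | hτ)
      · exact Or.inl ⟨_, mem_LTLSub_self _, by rw [replace, if_neg hφ]⟩
      · refine Set.union_subset_union_left _ (Set.image_mono (LTLSub_subset_of_mem ?_)) (ih hτ)
        exact Or.inr (mem_LTLSub_self ψ)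
  | or ψ χ ih₁ ih₂ | and ψ χ ih₁ ih₂ | untl ψ χ ih₁ ih₂ =>
    rw [replace]; split_ifs with hφ
    · exact Set.subset_union_right
    · rintro τ (rfl | hτ | hτ)
      · exact Or.inl ⟨_, mem_LTLSub_self _, by rw [replace, if_neg hφ]⟩
      · refine Set.union_subset_union_left _ (Set.image_mono (LTLSub_subset_of_mem ?_)) (ih₁ hτ)
        exact Or.inr (Or.inl (mem_LTLSub_self ψ))
      · refine Set.union_subset_union_left _ (Set.image_mono (LTLSub_subset_of_mem ?_)) (ih₂ hτ)
        exact Or.inr (Or.inr (mem_LTLSub_self χ))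

lemma LTLsz_replace_lt {φ : LTL P} (hold : old ∈ LTLSub φ) (hnew : new ∈ LTLSub φ)
    (hnot : old ∉ LTLSub new) : LTLsz (replace old new φ) < LTLsz φ := by
  have hfin := finite_LTLSub φ
  have hsub : LTLSub (replace old new φ) ⊆ replace old new '' (LTLSub φ \ {old}) := by
    rintro τ hτ
    rcases LTLSub_replace_subset φ hτ with ⟨σ, hσ, rfl⟩ | hτ
    · by_cases hσold : σ = old
      · refine ⟨new, ⟨hnew, fun e => hnot (e ▸ mem_LTLSub_self new)⟩, ?_⟩
        rw [hσold, replace_self, replace_eq_self_of_not_mem hnot]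
      · exact ⟨σ, ⟨hσ, hσold⟩, rfl⟩
    · have hτold : old ∉ LTLSub τ := fun h => hnot (LTLSub_subset_of_mem hτ h)
      refine ⟨τ, ⟨LTLSub_subset_of_mem hnew hτ, ?_⟩, replace_eq_self_of_not_mem hτold⟩
      rintro rfl
      exact hτold (mem_LTLSub_self _)
  calc (LTLSub (replace old new φ)).ncard
      ≤ (replace old new '' (LTLSub φ \ {old})).ncard :=
        Set.ncard_le_ncard hsub (hfin.sdiff.image _)
    _ ≤ (LTLSub φ \ {old}).ncard := Set.ncard_image_le hfin.sdiff
    _ < (LTLSub φ).ncard := Set.ncard_sdiff_singleton_lt_of_mem hold hfin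

structure IsCongruence (R : LTL P → LTL P → Prop) : Prop where
  atom (p : P) : R (.atom p) (.atom p)
  not {φ ψ : LTL P} : R φ ψ → R (.not φ) (.not ψ)
  or {φ₁ φ₂ ψ₁ ψ₂ : LTL P} : R φ₁ ψ₁ → R φ₂ ψ₂ → R (.or φ₁ φ₂) (.or ψ₁ ψ₂)
  and {φ₁ φ₂ ψ₁ ψ₂ : LTL P} : R φ₁ ψ₁ → R φ₂ ψ₂ → R (.and φ₁ φ₂) (.and ψ₁ ψ₂)
  next {φ ψ : LTL P} : R φ ψ → R (.next φ) (.next ψ)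
  fut {φ ψ : LTL P} : R φ ψ → R (.fut φ) (.fut ψ)
  glob {φ ψ : LTL P} : R φ ψ → R (.glob φ) (.glob ψ)
  untl {φ₁ φ₂ ψ₁ ψ₂ : LTL P} : R φ₁ ψ₁ → R φ₂ ψ₂ → R (.untl φ₁ φ₂) (.untl ψ₁ ψ₂)

lemma IsCongruence.replace {R : LTL P → LTL P → Prop} (hR : IsCongruence R) (h : R new old)
    (φ : LTL P) : R (replace old new φ) φ := by
  induction φ with
  | atom p => rw [LTL.replace]; split_ifs with hφ; exacts [hφ ▸ h, hR.atom p]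
  | not ψ ih => rw [LTL.replace]; split_ifs with hφ; exacts [hφ ▸ h, hR.not ih]
  | or ψ χ ih₁ ih₂ => rw [LTL.replace]; split_ifs with hφ; exacts [hφ ▸ h, hR.or ih₁ ih₂]
  | and ψ χ ih₁ ih₂ => rw [LTL.replace]; split_ifs with hφ; exacts [hφ ▸ h, hR.and ih₁ ih₂]
  | next ψ ih => rw [LTL.replace]; split_ifs with hφ; exacts [hφ ▸ h, hR.next ih]
  | fut ψ ih => rw [LTL.replace]; split_ifs with hφ; exacts [hφ ▸ h, hR.fut ih]
  | glob ψ ih => rw [LTL.replace]; split_ifs with hφ; exacts [hφ ▸ h, hR.glob ih]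
  | untl ψ χ ih₁ ih₂ => rw [LTL.replace]; split_ifs with hφ; exacts [hφ ▸ h, hR.untl ih₁ ih₂]

lemma isCongruence_satFin (u : List (Set P)) :
    IsCongruence fun a b => ∀ j < u.length, (satFin a (u.drop j) ↔ satFin b (u.drop j)) where
  atom _ _ _ := Iff.rfl
  not h j hj := not_congr (h j hj)
  or h₁ h₂ j hj := or_congr (h₁ j hj) (h₂ j hj)
  and h₁ h₂ j hj := and_congr (h₁ j hj) (h₂ j hj)
  next h j hj := by
    simp only [satFin, List.tail_drop, List.length_drop]
    exact and_congr_right fun h2 => h (j + 1) (by omega)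
  fut h j hj := by
    simp only [satFin, List.drop_drop, List.length_drop]
    exact exists_congr fun k => and_congr_right fun hk => h (j + k) (by omega)
  glob h j hj := by
    simp only [satFin, List.drop_drop, List.length_drop]
    exact forall_congr' fun k => imp_congr_right fun hk => h (j + k) (by omega)
  untl h₁ h₂ j hj := by
    simp only [satFin, List.drop_drop, List.length_drop]
    exact exists_congr fun k => and_congr_right fun hk =>
      and_congr (h₂ (j + k) (by omega))
        (forall_congr' fun m => imp_congr_right fun hm => h₁ (j + m) (by omega))

lemma isCongruence_satInf (f : ℕ → Set P) :
    IsCongruence fun a b =>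
      ∀ j, (satInf a (fun i => f (i + j)) ↔ satInf b (fun i => f (i + j))) where
  atom _ _ := Iff.rfl
  not h j := not_congr (h j)
  or h₁ h₂ j := or_congr (h₁ j) (h₂ j)
  and h₁ h₂ j := and_congr (h₁ j) (h₂ j)
  next h j := by
    simp only [satInf, Nat.add_assoc]
    exact h (1 + j)
  fut h j := by
    simp only [satInf, Nat.add_assoc]
    exact exists_congr fun k => h (k + j)
  glob h j := by
    simp only [satInf, Nat.add_assoc]
    exact forall_congr' fun k => h (k + j)
  untl h₁ h₂ j := by
    simp only [satInf, Nat.add_assoc]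
    exact exists_congr fun k => and_congr (h₂ (k + j))
      (forall_congr' fun m => imp_congr_right fun _ => h₁ (m + j))

lemma isCongruence_mem (F : LTLFragment P) : IsCongruence fun a b => F.Mem b → F.Mem a where
  atom _ := id
  not h hb := ⟨hb.1, h hb.2⟩
  or h₁ h₂ hb := ⟨hb.1, h₁ hb.2.1, h₂ hb.2.2⟩
  and h₁ h₂ hb := ⟨hb.1, h₁ hb.2.1, h₂ hb.2.2⟩
  next h hb := ⟨hb.1, h hb.2⟩
  fut h hb := ⟨hb.1, h hb.2⟩
  glob h hb := ⟨hb.1, h hb.2⟩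
  untl h₁ h₂ hb := ⟨hb.1, h₁ hb.2.1, h₂ hb.2.2⟩

end LTL

namespace UPWord

def satAt (w : UPWord P) (χ : LTL P) (j : ℕ) : Prop :=
  if w.v = [] then satFin χ (w.u.drop j) else satInf χ (fun i => w.letter (i + j))

lemma letter_add_mul_length_v (w : UPWord P) {i : ℕ} (hi : w.u.length ≤ i) (k : ℕ) :
    w.letter (i + k * w.v.length) = w.letter i := by
  unfold letter
  rw [if_neg (by omega), if_neg (by omega), Nat.sub_add_comm hi, Nat.add_mul_mod_self_right]

lemma exists_shift_eq (w : UPWord P) (hv : w.v ≠ []) (j : ℕ) :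
    ∃ j' < w.norm, (fun i => w.letter (i + j)) = fun i => w.letter (i + j') := by
  by_cases hj : j < w.u.length
  · exact ⟨j, by unfold norm; omega, rfl⟩
  replace hv := List.length_pos_iff.2 hv
  set m := j - w.u.length
  refine ⟨w.u.length + m % w.v.length, by unfold norm; have := Nat.mod_lt m hv; omega,
    funext fun i => ?_⟩
  have hj' : i + j = i + (w.u.length + m % w.v.length) + m / w.v.length * w.v.length := by
    have := Nat.mod_add_div' m w.v.length; omega
  rw [hj', letter_add_mul_length_v w (by omega)]

lemma sat_replace (w : UPWord P) {old new : LTL P}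
    (h : ∀ j < w.norm, (w.satAt old j ↔ w.satAt new j)) (φ : LTL P) :
    w.sat (LTL.replace old new φ) ↔ w.sat φ := by
  unfold sat
  split_ifs with hv
  · have hu : 0 < w.u.length := List.length_pos_iff.2 (w.ne.resolve_right (not_not.2 hv))
    refine (LTL.isCongruence_satFin w.u).replace (fun j hj => ?_) φ 0 hu
    simpa [satAt, hv] using (h j (by unfold norm; omega)).symm
  · refine (LTL.isCongruence_satInf w.letter).replace (fun j => ?_) φ 0
    obtain ⟨j', hj', hshift⟩ := w.exists_shift_eq hv j
    simpa [satAt, hv, hshift] using (h j' hj').symm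

end UPWord

def footprint (S : Finset (UPWord P)) (χ : LTL P) : (w : S) → Fin w.1.norm → Prop :=
  fun w j => w.1.satAt χ j

lemma card_footprint_space (S : Finset (UPWord P)) :
    Nat.card ((w : S) → Fin w.1.norm → Prop) = 2 ^ ∑ w ∈ S, w.norm := by
  simp [Finset.prod_pow_eq_pow_sum, Finset.sum_attach S UPWord.norm]

lemma exists_equiv_LTLsz_lt_of_footprint_eq {S : Finset (UPWord P)} {F : LTLFragment P}
    {φ a b : LTL P} (hφ : F.Mem φ) (ha : a ∈ LTLSub φ) (hb : b ∈ LTLSub φ) (hab : a ≠ b)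
    (h : footprint S a = footprint S b) :
    ∃ ψ, F.Mem ψ ∧ (∀ w ∈ S, w.sat ψ ↔ w.sat φ) ∧ LTLsz ψ < LTLsz φ := by
  -- Replacing the larger of the two by the smaller one keeps the replaced formula out of
  -- its replacement, so that it disappears from the syntax DAG.
  wlog hle : sizeOf a ≤ sizeOf b generalizing a b
  · exact this hb ha hab.symm h.symm (by omega)
  have hba : b ∉ LTLSub a := fun hb' => absurd (sizeOf_lt_of_mem_LTLSub hb' hab.symm) (by omega)
  refine ⟨LTL.replace b a φ, (LTL.isCongruence_mem F).replace (fun _ => hφ.of_mem_LTLSub ha) φ hφ,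
    fun w hw => w.sat_replace (fun j hj => ?_) φ, LTL.LTLsz_replace_lt hb ha hba⟩
  exact Iff.of_eq (congrFun (congrFun h ⟨w, hw⟩) ⟨j, hj⟩).symm

theorem LTLsz_le_two_pow_of_minimal {S : Finset (UPWord P)} {F : LTLFragment P} {φ : LTL P}
    (hφ : F.Mem φ)
    (hmin : ∀ ψ, F.Mem ψ → (∀ w ∈ S, w.sat ψ ↔ w.sat φ) → LTLsz φ ≤ LTLsz ψ) :
    LTLsz φ ≤ 2 ^ ∑ w ∈ S, w.norm := by
  have hinj : Set.InjOn (footprint S) (LTLSub φ) := by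
    intro a ha b hb h
    by_contra hab
    obtain ⟨ψ, hψ, hequiv, hlt⟩ := exists_equiv_LTLsz_lt_of_footprint_eq hφ ha hb hab h
    exact (hmin ψ hψ hequiv).not_gt hlt
  calc LTLsz φ = (footprint S '' LTLSub φ).ncard := hinj.ncard_image.symm
    _ ≤ Nat.card ((w : S) → Fin w.1.norm → Prop) := Set.ncard_le_card _
    _ = 2 ^ ∑ w ∈ S, w.norm := card_footprint_space S

end

theorem ltl_separating_size_general (P : Type)
    (F : LTLFragment P) (Pos Neg : Finset (UPWord P)) :
    (∃ φ : LTL P, F.Mem φ ∧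
        (∀ w ∈ Pos, w.sat φ) ∧ (∀ w ∈ Neg, ¬ w.sat φ)) →
    ∃ φ : LTL P, F.Mem φ ∧
        (∀ w ∈ Pos, w.sat φ) ∧ (∀ w ∈ Neg, ¬ w.sat φ) ∧
        LTLsz φ ≤ 2 ^ (∑ w ∈ Pos ∪ Neg, w.norm) := by
  intro hsep
  obtain ⟨φ, ⟨hφ, hpos, hneg⟩, hmin⟩ := (measure (LTLsz (P := P))).wf.has_min _ hsep
  refine ⟨φ, hφ, hpos, hneg, LTLsz_le_two_pow_of_minimal hφ fun ψ hψ hequiv => ?_⟩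
  refine not_lt.1 (hmin ψ ⟨hψ, fun w hw => ?_, fun w hw hsat => ?_⟩)
  · exact (hequiv w (Finset.mem_union_left _ hw)).2 (hpos w hw)
  · exact hneg w hw ((hequiv w (Finset.mem_union_right _ hw)).1 hsat)

/-- **Corollary.** For any fragment of `LTL(Prop)` and any sample `(Pos, Neg)` of
words of `W(Prop)`: if some fragment formula separates the sample, then one of
size at most `2^n` does, where `n = Σ_{w ∈ Pos ∪ Neg} ‖w‖`. -/
theorem ltl_separating_size (P : Type) [Finite P] (hP : Nonempty P)
    (F : LTLFragment P) (Pos Neg : Finset (UPWord P)) :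
    (∃ φ : LTL P, F.Mem φ ∧
        (∀ w ∈ Pos, w.sat φ) ∧ (∀ w ∈ Neg, ¬ w.sat φ)) →
    ∃ φ : LTL P, F.Mem φ ∧
        (∀ w ∈ Pos, w.sat φ) ∧ (∀ w ∈ Neg, ¬ w.sat φ) ∧
        LTLsz φ ≤ 2 ^ (∑ w ∈ Pos ∪ Neg, w.norm) :=
  ltl_separating_size_general P F Pos Neg
end

section
/- Let Prop = {a, b} and let K be the actionless Kripke structure with states {q₁, q₂, q₃}, initial state q₁, transitions δ(q₁) = {q₂, q₃}, δ(q₂) = {q₃}, δ(q₃) = {q₂, q₃}, and labels π(q₁) = ∅, π(q₂) = {b}, π(q₃) = {a}. Then there is no pair (SEM, sem) with SEM a finite set and sem a function from LTL({a,b})-formulas to SEM such that both: (i) (inductive property) for every unary LTL operator o ∈ {¬, X, F, G}, sem(φ) = sem(φ') implies sem(oφ) = sem(oφ'), and for every binary operator o ∈ {∧, ∨, U}, sem(φ₁) = sem(φ₁') and sem(φ₂) = sem(φ₂') imply sem(o(φ₁,φ₂)) = sem(o(φ₁',φ₂')); and (ii) (capturing the semantics) sem(φ) = sem(φ') implies (K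 ⊨ φ ⟺ K ⊨ φ'). -/
/- The propositions are `Prop = {a, b}`, encoded by the type `Bool`
with `a := true` and `b := false`. -/

/-- Transition function of the Kripke structure `K` of Figure 1:
states `q₁ = 0`, `q₂ = 1`, `q₃ = 2`, with `δ(q₁) = {q₂, q₃}`, `δ(q₂) = {q₃}`,
`δ(q₃) = {q₂, q₃}`. -/
def Kδ : Fin 3 → Set (Fin 3) :=
  fun q => if q = 0 then {1, 2} else if q = 1 then {2} else {1, 2}

/-- Labelling of `K`: `π(q₁) = ∅`, `π(q₂) = {b}`, `π(q₃) = {a}`. -/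
def Kπ : Fin 3 → Set Bool :=
  fun q => if q = 0 then ∅ else if q = 1 then {false} else {true}

/-- `K ⊨ φ`: every path of `K` from the initial state `q₁` satisfies `φ`. -/
def KSat (φ : LTL Bool) : Prop :=
  ∀ ρ : ℕ → Fin 3, ρ 0 = 0 → (∀ i, ρ (i + 1) ∈ Kδ (ρ i)) →
    satInf φ (fun i => Kπ (ρ i))

/-- `n`-fold application of the `next` operator. -/
def Xn : ℕ → LTL Bool → LTL Bool
  | 0, φ => φ
  | n + 1, φ => .next (Xn n φ)

lemma Xn_add (j k : ℕ) (φ : LTL Bool) : Xn (j + k) φ = Xn j (Xn k φ) := by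
  induction j with
  | zero => simp [Xn]
  | succ j ih => rw [Nat.succ_add]; simp [Xn, ih]

lemma satInf_Xn (n : ℕ) (φ : LTL Bool) (w : ℕ → Set Bool) :
    satInf (Xn n φ) w ↔ satInf φ (fun i => w (i + n)) := by
  induction n generalizing w with
  | zero => simp [Xn, satInf]
  | succ n ih =>
      show satInf (Xn n φ) (fun i => w (i + 1)) ↔ _
      rw [ih]
      have : (fun i => (fun i => w (i + 1)) (i + n)) = fun i => w (i + (n + 1)) := by
        funext i; congr 1 <;> omega
      rw [this]

lemma sem_Xn_cong {V : Type} (sem : LTL Bool → V)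
    (hnext : ∀ φ φ' : LTL Bool, sem φ = sem φ' → sem (.next φ) = sem (.next φ'))
    (n : ℕ) (φ φ' : LTL Bool) (h : sem φ = sem φ') :
    sem (Xn n φ) = sem (Xn n φ') := by
  induction n with
  | zero => exact h
  | succ n ih => exact hnext _ _ ih

/-- **Proposition.** There is no pair `(SEM, sem)` with `SEM` finite which both
satisfies the inductive property and captures the semantics of `LTL({a,b})` on
the Kripke structure `K` of Figure 1. -/
theorem no_inductive_capturing_pair :
    ¬ ∃ (V : Type) (_ : Finite V) (sem : LTL Bool → V),
      ((∀ φ φ' : LTL Bool, sem φ = sem φ' → sem (.not φ) = sem (.not φ')) ∧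
       (∀ φ φ' : LTL Bool, sem φ = sem φ' → sem (.next φ) = sem (.next φ')) ∧
       (∀ φ φ' : LTL Bool, sem φ = sem φ' → sem (.fut φ) = sem (.fut φ')) ∧
       (∀ φ φ' : LTL Bool, sem φ = sem φ' → sem (.glob φ) = sem (.glob φ')) ∧
       (∀ φ₁ φ₁' φ₂ φ₂' : LTL Bool, sem φ₁ = sem φ₁' → sem φ₂ = sem φ₂' →
          sem (.and φ₁ φ₂) = sem (.and φ₁' φ₂')) ∧
       (∀ φ₁ φ₁' φ₂ φ₂' : LTL Bool, sem φ₁ = sem φ₁' → sem φ₂ = sem φ₂' →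
          sem (.or φ₁ φ₂) = sem (.or φ₁' φ₂')) ∧
       (∀ φ₁ φ₁' φ₂ φ₂' : LTL Bool, sem φ₁ = sem φ₁' → sem φ₂ = sem φ₂' →
          sem (.untl φ₁ φ₂) = sem (.untl φ₁' φ₂'))) ∧
      (∀ φ φ' : LTL Bool, sem φ = sem φ' → (KSat φ ↔ KSat φ')) := by

  rintro ⟨V, hV, sem, ⟨hnot, hnext, hfut, hglob, hand, hor, huntl⟩, hcap⟩
  -- Pigeonhole on the semantics of `Xⁿ b`.
  obtain ⟨m0, n0, hne, heq⟩ :=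
    Finite.exists_ne_map_eq_of_infinite (fun n => sem (Xn n (.atom false)))
  -- WLOG `m < n`.
  obtain ⟨m, n, hmn, hEq⟩ : ∃ m n : ℕ, m < n ∧
      sem (Xn m (.atom false)) = sem (Xn n (.atom false)) := by
    rcases Nat.lt_or_gt_of_ne hne with h | h
    · exact ⟨m0, n0, h, heq⟩
    · exact ⟨n0, m0, h, heq.symm⟩
  set d := n - m with hd
  have hdn : n = m + d := by omega
  have hd1 : 1 ≤ d := by omega
  -- Amplify: `sem (X^m b) = sem (X^{m + j*d} b)` for all `j`.
  have hamp : ∀ j : ℕ, sem (Xn m (.atom false)) = sem (Xn (m + j * d) (.atom false)) := by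
    intro j
    induction j with
    | zero => simp
    | succ j ih =>
        refine ih.trans ?_
        have h1 : sem (Xn (j * d) (Xn m (.atom false)))
            = sem (Xn (j * d) (Xn n (.atom false))) :=
          sem_Xn_cong sem hnext _ _ _ hEq
        rw [← Xn_add, ← Xn_add] at h1
        have e1 : j * d + m = m + j * d := by omega
        have e2 : j * d + n = m + (j + 1) * d := by
          rw [hdn, Nat.succ_mul]; ring
        rw [e1, e2] at h1
        exact h1
  set M := m with hM
  set N := m + 3 * d with hN
  have hMN : M + 3 ≤ N := by omega
  have hE : sem (Xn M (.atom false)) = sem (Xn N (.atom false)) := hamp 3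
  -- The distinguishing context: `C ψ = ¬ψ ∨ X^{M+1} a`.
  set A : LTL Bool := Xn (M + 1) (.atom true) with hA
  have hsemC : sem (.or (.not (Xn M (.atom false))) A)
      = sem (.or (.not (Xn N (.atom false))) A) :=
    hor _ _ _ _ (hnot _ _ hE) rfl
  have hiff := hcap _ _ hsemC
  -- `K ⊨ ¬X^M b ∨ X^{M+1} a` holds.
  have hKM : KSat (.or (.not (Xn M (.atom false))) A) := by
    intro ρ h0 hstep
    show (¬ satInf (Xn M (.atom false)) _) ∨ satInf A _
    by_cases hb : satInf (Xn M (.atom false)) (fun i => Kπ (ρ i))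
    · right
      rw [satInf_Xn] at hb
      have hb' : false ∈ Kπ (ρ (0 + M)) := hb
      have hzM : (0 : ℕ) + M = M := by omega
      rw [hzM] at hb'
      have key : ∀ q : Fin 3, false ∈ Kπ q → q = 1 := by
        intro q; fin_cases q <;> simp [Kπ]
      have hq : ρ M = 1 := key _ hb'
      have hnext' := hstep M
      rw [hq] at hnext'
      have hq2 : ρ (M + 1) = 2 := by
        simpa [Kδ] using hnext'
      rw [hA, satInf_Xn]
      show true ∈ Kπ (ρ (0 + (M + 1)))
      have : (0 : ℕ) + (M + 1) = M + 1 := by omega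
      rw [this, hq2]
      simp [Kπ]
    · left; exact hb
  -- But `K ⊨ ¬X^N b ∨ X^{M+1} a` fails.
  have hKN : ¬ KSat (.or (.not (Xn N (.atom false))) A) := by
    intro hK
    -- counterexample path
    set ρ : ℕ → Fin 3 := fun i => if i = 0 then 0 else if i = N ∨ i = M + 1 then 1 else 2
      with hρ
    have h0 : ρ 0 = 0 := by simp [hρ]
    have hstep : ∀ i, ρ (i + 1) ∈ Kδ (ρ i) := by
      intro i
      have hi1 : i + 1 ≠ 0 := by omega
      by_cases hi0 : i = 0
      · subst hi0
        by_cases h : 1 = N ∨ 1 = M + 1 <;> simp [hρ, h, Kδ] <;> omega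
      · by_cases hq2 : i = N ∨ i = M + 1
        · -- from state 1 we must go to 2
          have hnot1 : ¬ (i + 1 = N ∨ i + 1 = M + 1) := by
            rcases hq2 with h | h <;> omega
          simp [hρ, hi0, hi1, hq2, hnot1, Kδ] <;> omega
        · by_cases h : i + 1 = N ∨ i + 1 = M + 1 <;>
            simp [hρ, hi0, hi1, hq2, h, Kδ] <;> omega
    have hsat := hK ρ h0 hstep
    rcases hsat with hL | hR
    · apply hL
      rw [satInf_Xn]
      show false ∈ Kπ (ρ (0 + N))
      have hzN : (0 : ℕ) + N = N := by omega
      have hNval : ρ N = 1 := by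
        have hN0 : N ≠ 0 := by omega
        simp [hρ, hN0]
      rw [hzN, hNval]
      simp [Kπ]
    · rw [hA, satInf_Xn] at hR
      have hR' : true ∈ Kπ (ρ (0 + (M + 1))) := hR
      have : (0 : ℕ) + (M + 1) = M + 1 := by omega
      rw [this] at hR'
      have hMval : ρ (M + 1) = 1 := by
        have : M + 1 ≠ 0 := by omega
        simp [hρ, this]
      rw [hMval] at hR'
      simp [Kπ] at hR'
  exact hKN (hiff.mp hKM)
end

section
/- Let L be any fragment of CTL(Prop) and let 𝒫, 𝒩 be finite sets of actionless Kripke structures over Prop. If there is a (𝒫,𝒩)-separating L-formula, then there is one of size at most 2^n, where n := Σ_{K ∈ 𝒫∪𝒩} |Q_K|. -/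
open scoped Classical

/-- Formulas of computation tree logic `CTL(Prop)`:
`φ ::= p | ¬φ | φ∨φ | φ∧φ | 𝒬Xφ | 𝒬Fφ | 𝒬Gφ | 𝒬(φUφ)` with `𝒬 ∈ {∃, ∀}`.
The path quantifier is encoded as a `Bool` (`true` for `∃`, `false` for `∀`). -/
inductive CTL (P : Type) : Type
  | atom : P → CTL P
  | not : CTL P → CTL P
  | or : CTL P → CTL P → CTL P
  | and : CTL P → CTL P → CTL P
  | qnext : Bool → CTL P → CTL P
  | qfut : Bool → CTL P → CTL P
  | qglob : Bool → CTL P → CTL P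
  | quntil : Bool → CTL P → CTL P → CTL P

/-- An actionless Kripke structure over `Prop`: a finite non-empty set of states,
initial states, a transition function and a labelling by propositions. -/
structure AKripke (P : Type) where
  Q : Type
  [finQ : Fintype Q]
  neQ : Nonempty Q
  I : Set Q
  δ : Q → Set Q
  π : Q → Set P

attribute [instance] AKripke.finQ

/-- Quantification (`∃` for `b = true`, `∀` for `b = false`) over the infinite
paths of `K` starting at `q`. -/
def QPath {P : Type} (K : AKripke P) (b : Bool) (q : K.Q)
    (Pred : (ℕ → K.Q) → Prop) : Prop :=
  if b then ∃ ρ : ℕ → K.Q, ρ 0 = q ∧ (∀ i, ρ (i + 1) ∈ K.δ (ρ i)) ∧ Pred ρ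
  else ∀ ρ : ℕ → K.Q, ρ 0 = q → (∀ i, ρ (i + 1) ∈ K.δ (ρ i)) → Pred ρ

/-- Satisfaction of a `CTL` formula at a state of an actionless Kripke structure. -/
def CTLsat {P : Type} (K : AKripke P) : CTL P → K.Q → Prop
  | .atom p, q => p ∈ K.π q
  | .not φ, q => ¬ CTLsat K φ q
  | .or φ ψ, q => CTLsat K φ q ∨ CTLsat K ψ q
  | .and φ ψ, q => CTLsat K φ q ∧ CTLsat K ψ q
  | .qnext b φ, q => QPath K b q (fun ρ => CTLsat K φ (ρ 1))
  | .qfut b φ, q => QPath K b q (fun ρ => ∃ i, CTLsat K φ (ρ i))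
  | .qglob b φ, q => QPath K b q (fun ρ => ∀ i, CTLsat K φ (ρ i))
  | .quntil b φ ψ, q =>
      QPath K b q (fun ρ => ∃ i, CTLsat K ψ (ρ i) ∧ ∀ j < i, CTLsat K φ (ρ j))

/-- `K ⊨ φ`: every initial state satisfies `φ`. -/
def CTLsatK {P : Type} (K : AKripke P) (φ : CTL P) : Prop :=
  ∀ q ∈ K.I, CTLsat K φ q

/-- A fragment of `CTL(Prop)`: a subset of its operators (atomic propositions,
`¬`, `∨`, `∧`, and for each temporal operator the set of allowed path
quantifiers). -/
structure CTLFragment (P : Type) where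
  atoms : Set P
  hasNot : Prop
  hasOr : Prop
  hasAnd : Prop
  nextQ : Set Bool
  futQ : Set Bool
  globQ : Set Bool
  untilQ : Set Bool

/-- A formula belongs to the fragment if it is built using only its operators. -/
def CTLFragment.Mem {P : Type} (F : CTLFragment P) : CTL P → Prop
  | .atom p => p ∈ F.atoms
  | .not φ => F.hasNot ∧ F.Mem φ
  | .or φ ψ => F.hasOr ∧ F.Mem φ ∧ F.Mem ψ
  | .and φ ψ => F.hasAnd ∧ F.Mem φ ∧ F.Mem ψ
  | .qnext b φ => b ∈ F.nextQ ∧ F.Mem φ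
  | .qfut b φ => b ∈ F.futQ ∧ F.Mem φ
  | .qglob b φ => b ∈ F.globQ ∧ F.Mem φ
  | .quntil b φ ψ => b ∈ F.untilQ ∧ F.Mem φ ∧ F.Mem ψ

/-- The set of subformulas of a `CTL` formula. -/
def CTLSub {P : Type} : CTL P → Set (CTL P)
  | .atom p => {.atom p}
  | .not φ => insert (.not φ) (CTLSub φ)
  | .or φ ψ => insert (.or φ ψ) (CTLSub φ ∪ CTLSub ψ)
  | .and φ ψ => insert (.and φ ψ) (CTLSub φ ∪ CTLSub ψ)
  | .qnext b φ => insert (.qnext b φ) (CTLSub φ)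
  | .qfut b φ => insert (.qfut b φ) (CTLSub φ)
  | .qglob b φ => insert (.qglob b φ) (CTLSub φ)
  | .quntil b φ ψ => insert (.quntil b φ ψ) (CTLSub φ ∪ CTLSub ψ)

/-- The (syntax-DAG) size of a `CTL` formula: its number of distinct subformulas. -/
noncomputable def CTLsz {P : Type} (φ : CTL P) : ℕ := (CTLSub φ).ncard

/-!
If two distinct subformulas of a separating formula `φ` have the same truth value at every
state of every structure of the sample, replace every occurrence of the one that is not a
subformula of the other (the larger one) by the other. Satisfaction in the sample and
membership in the fragment are preserved, and the number of distinct subformulas drops.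
Once no such merge is possible, distinct subformulas have distinct truth tables on the
`n` states of the sample, so there are at most `2 ^ n` of them.
-/

namespace CTL

variable {P : Type}

theorem CTLSub_finite (χ : CTL P) : (CTLSub χ).Finite := by
  induction χ <;> simp_all [CTLSub]

theorem CTLSub_subset_of_mem {σ χ : CTL P} (h : σ ∈ CTLSub χ) : CTLSub σ ⊆ CTLSub χ := by
  induction χ <;> simp only [CTLSub, Set.mem_insert_iff, Set.mem_union,
    Set.mem_singleton_iff] at h <;> grind [CTLSub]

theorem sizeOf_le_of_mem_CTLSub {σ χ : CTL P} (h : σ ∈ CTLSub χ) : sizeOf σ ≤ sizeOf χ := by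
  induction χ <;> simp only [CTLSub, Set.mem_insert_iff, Set.mem_union,
    Set.mem_singleton_iff] at h <;> grind

theorem sizeOf_lt_of_mem_CTLSub {σ χ : CTL P} (h : σ ∈ CTLSub χ) (hne : σ ≠ χ) :
    sizeOf σ < sizeOf χ := by
  cases χ <;> simp only [CTLSub, Set.mem_insert_iff, Set.mem_union,
    Set.mem_singleton_iff] at h <;> grind [→ sizeOf_le_of_mem_CTLSub]

theorem _root_.CTLFragment.Mem.of_mem_CTLSub {F : CTLFragment P} {σ χ : CTL P}
    (hχ : F.Mem χ) (h : σ ∈ CTLSub χ) : F.Mem σ := by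
  induction χ <;> simp only [CTLSub, Set.mem_insert_iff, Set.mem_union,
    Set.mem_singleton_iff] at h <;> grind [CTLFragment.Mem]

/-- `replace a b χ` replaces every occurrence of the subformula `b` in `χ` by `a`. -/
noncomputable def replace (a b : CTL P) : CTL P → CTL P
  | .atom p => if CTL.atom p = b then a else .atom p
  | .not φ => if CTL.not φ = b then a else .not (replace a b φ)
  | .or φ ψ => if CTL.or φ ψ = b then a else .or (replace a b φ) (replace a b ψ)
  | .and φ ψ => if CTL.and φ ψ = b then a else .and (replace a b φ) (replace a b ψ)
  | .qnext q φ => if CTL.qnext q φ = b then a else .qnext q (replace a b φ)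
  | .qfut q φ => if CTL.qfut q φ = b then a else .qfut q (replace a b φ)
  | .qglob q φ => if CTL.qglob q φ = b then a else .qglob q (replace a b φ)
  | .quntil q φ ψ =>
      if CTL.quntil q φ ψ = b then a else .quntil q (replace a b φ) (replace a b ψ)

theorem replace_self (a b : CTL P) : replace a b b = a := by
  cases b <;> simp [replace]

theorem replace_of_not_mem_CTLSub {a b χ : CTL P} (h : b ∉ CTLSub χ) : replace a b χ = χ := by
  induction χ <;> simp only [CTLSub, Set.mem_insert_iff, Set.mem_union,
    Set.mem_singleton_iff] at h <;> grind [replace]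

theorem CTLsat_replace {K : AKripke P} {a b : CTL P} (hab : CTLsat K a = CTLsat K b)
    (χ : CTL P) : CTLsat K (replace a b χ) = CTLsat K χ := by
  induction χ <;> simp only [replace] <;> split_ifs with h <;>
    first | (subst h; exact hab) | simp_all [CTLsat]

theorem _root_.CTLFragment.Mem.replace {F : CTLFragment P} {a b χ : CTL P}
    (hχ : F.Mem χ) (ha : F.Mem a) : F.Mem (replace a b χ) := by
  induction χ <;> simp only [CTL.replace] <;> split_ifs <;> simp_all [CTLFragment.Mem]

theorem CTLSub_replace_subset (a b χ : CTL P) :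
    CTLSub (replace a b χ) ⊆ replace a b '' CTLSub χ ∪ CTLSub a := by
  induction χ <;> simp only [replace] <;> split_ifs with h <;>
    first
    | exact Set.subset_union_right
    | intro σ hσ
      simp only [Set.mem_union, Set.mem_image, CTLSub, Set.mem_insert_iff,
        Set.subset_def] at *
      grind [replace]

theorem CTLsz_replace_lt {φ a b : CTL P} (ha : a ∈ CTLSub φ) (hb : b ∈ CTLSub φ)
    (hab : a ≠ b) (hba : b ∉ CTLSub a) : CTLsz (replace a b φ) < CTLsz φ := by
  have hfin := CTLSub_finite φ
  have hsub : CTLSub (replace a b φ) ⊆ replace a b '' (CTLSub φ \ {b}) := by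
    intro σ hσ
    rcases CTLSub_replace_subset a b φ hσ with ⟨τ, hτ, rfl⟩ | hσa
    · by_cases hτb : τ = b
      · subst hτb
        exact ⟨a, ⟨ha, hab⟩, by rw [replace_of_not_mem_CTLSub hba, replace_self]⟩
      · exact ⟨τ, ⟨hτ, hτb⟩, rfl⟩
    · refine ⟨σ, ⟨CTLSub_subset_of_mem ha hσa, fun h => hba (h ▸ hσa)⟩, ?_⟩
      exact replace_of_not_mem_CTLSub fun h => hba (CTLSub_subset_of_mem hσa h)
  calc CTLsz (replace a b φ)
      ≤ (replace a b '' (CTLSub φ \ {b})).ncard := Set.ncard_le_ncard hsub (hfin.sdiff.image _)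
    _ ≤ (CTLSub φ \ {b}).ncard := Set.ncard_image_le hfin.sdiff
    _ < CTLsz φ := Set.ncard_sdiff_singleton_lt_of_mem hb hfin

def truthTable (S : Finset (AKripke P)) (χ : CTL P) : (K : S) → K.1.Q → Prop :=
  fun K => CTLsat K.1 χ

theorem card_truthTables (S : Finset (AKripke P)) :
    Nat.card ((K : S) → K.1.Q → Prop) = 2 ^ ∑ K ∈ S, Fintype.card K.Q := by
  simp [Finset.prod_pow_eq_pow_sum, Finset.sum_attach S fun K => Fintype.card K.Q]

theorem CTLsz_le_of_injOn_truthTable {S : Finset (AKripke P)} {φ : CTL P}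
    (h : (CTLSub φ).InjOn (truthTable S)) : CTLsz φ ≤ 2 ^ ∑ K ∈ S, Fintype.card K.Q := by
  rw [← card_truthTables, CTLsz, ← h.ncard_image]
  exact Set.ncard_le_card _

theorem exists_replace_CTLsz_lt {S : Finset (AKripke P)} {φ : CTL P}
    (h : ¬ (CTLSub φ).InjOn (truthTable S)) :
    ∃ a ∈ CTLSub φ, ∃ b, truthTable S a = truthTable S b ∧ CTLsz (replace a b φ) < CTLsz φ := by
  obtain ⟨x, hx, y, hy, hxy, hne⟩ : ∃ x ∈ CTLSub φ, ∃ y ∈ CTLSub φ,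
      truthTable S x = truthTable S y ∧ x ≠ y := by
    simpa [Set.InjOn] using h
  -- the smaller of the two cannot contain the larger one
  rcases le_total (sizeOf x) (sizeOf y) with hle | hle
  · exact ⟨x, hx, y, hxy, CTLsz_replace_lt hx hy hne
      fun h => (sizeOf_lt_of_mem_CTLSub h hne.symm).not_ge hle⟩
  · exact ⟨y, hy, x, hxy.symm, CTLsz_replace_lt hy hx hne.symm
      fun h => (sizeOf_lt_of_mem_CTLSub h hne).not_ge hle⟩

theorem exists_CTLsat_eq_CTLsz_le (S : Finset (AKripke P)) {F : CTLFragment P} {φ : CTL P}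
    (hφ : F.Mem φ) : ∃ ψ, F.Mem ψ ∧ (∀ K ∈ S, CTLsat K ψ = CTLsat K φ) ∧
      CTLsz ψ ≤ 2 ^ ∑ K ∈ S, Fintype.card K.Q := by
  by_cases hinj : (CTLSub φ).InjOn (truthTable S)
  · exact ⟨φ, hφ, fun _ _ => rfl, CTLsz_le_of_injOn_truthTable hinj⟩
  obtain ⟨a, ha, b, hab, hlt⟩ := exists_replace_CTLsz_lt hinj
  obtain ⟨ψ, hψF, hψ, hsz⟩ := exists_CTLsat_eq_CTLsz_le S (hφ.replace (hφ.of_mem_CTLSub ha))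
  exact ⟨ψ, hψF, fun K hK => (hψ K hK).trans (CTLsat_replace (congrFun hab ⟨K, hK⟩) φ), hsz⟩
termination_by CTLsz φ

end CTL

theorem ctl_separating_size_general (P : Type)
    (F : CTLFragment P) (Pos Neg : Finset (AKripke P)) :
    (∃ φ : CTL P, F.Mem φ ∧
        (∀ K ∈ Pos, CTLsatK K φ) ∧ (∀ K ∈ Neg, ¬ CTLsatK K φ)) →
    ∃ φ : CTL P, F.Mem φ ∧
        (∀ K ∈ Pos, CTLsatK K φ) ∧ (∀ K ∈ Neg, ¬ CTLsatK K φ) ∧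
        CTLsz φ ≤ 2 ^ (∑ K ∈ Pos ∪ Neg, Fintype.card K.Q) := by
  rintro ⟨φ, hφF, hPos, hNeg⟩
  obtain ⟨ψ, hψF, hψ, hsz⟩ := CTL.exists_CTLsat_eq_CTLsz_le (Pos ∪ Neg) hφF
  have hsat : ∀ K ∈ Pos ∪ Neg, CTLsatK K ψ ↔ CTLsatK K φ := fun K hK => by
    simp only [CTLsatK, hψ K hK]
  refine ⟨ψ, hψF, fun K hK => ?_, fun K hK => ?_, hsz⟩
  · exact (hsat K (Finset.mem_union_left _ hK)).2 (hPos K hK)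
  · exact (hsat K (Finset.mem_union_right _ hK)).not.2 (hNeg K hK)

/-- **Corollary.** For any fragment of `CTL(Prop)` and any sample `(Pos, Neg)` of
actionless Kripke structures: if some fragment formula separates the sample, then
one of size at most `2^n` does, where `n` is the total number of states of the
sample. -/
theorem ctl_separating_size (P : Type) [Finite P] (hP : Nonempty P)
    (F : CTLFragment P) (Pos Neg : Finset (AKripke P)) :
    (∃ φ : CTL P, F.Mem φ ∧
        (∀ K ∈ Pos, CTLsatK K φ) ∧ (∀ K ∈ Neg, ¬ CTLsatK K φ)) →
    ∃ φ : CTL P, F.Mem φ ∧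
        (∀ K ∈ Pos, CTLsatK K φ) ∧ (∀ K ∈ Neg, ¬ CTLsatK K φ) ∧
        CTLsz φ ≤ 2 ^ (∑ K ∈ Pos ∪ Neg, Fintype.card K.Q) :=
  ctl_separating_size_general P F Pos Neg
end

section
/- Let L be any fragment of ATL(Prop) and let 𝒫, 𝒩 be finite sets of concurrent game structures over Prop. If there is a (𝒫,𝒩)-separating L-formula, then there is one of size at most 2^n, where n := Σ_{C ∈ 𝒫∪𝒩} |Q_C|. -/
/-!
If `φ` has more than `2 ^ n` distinct subformulas, then by pigeonhole two of them, `σ ≠ τ`,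
hold at exactly the same states of every structure of the sample, since each subformula
determines one set of states per structure. Orient them so that `σ` does not occur in `τ`
(the subformula order is antisymmetric). Replacing every occurrence of `σ` in `φ` by `τ` then
preserves the semantics on the sample and membership in the fragment, and strictly decreases
the number of distinct subformulas. Iterating yields a formula of size at most `2 ^ n` that
separates the sample whenever `φ` does.
-/

open scoped Classical

/-- A concurrent game structure over `Prop`: a finite non-empty set of states,
initial states, `k ≥ 1` agents, a labelling, for each state and agent the number
`d q a ≥ 1` of available actions (actions are numbered `1, …, d q a`), and a
transition function mapping a state and a tuple of one action per agent to the
successor state. -/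
structure CGS (P : Type) where
  Q : Type
  [finQ : Fintype Q]
  neQ : Nonempty Q
  I : Set Q
  k : ℕ
  hk : 1 ≤ k
  π : Q → Set P
  d : Q → Fin k → ℕ
  hd : ∀ q a, 1 ≤ d q a
  δ : Q → (Fin k → ℕ) → Q

attribute [instance] CGS.finQ

/-- A strategy for agent `a`: on every non-empty history it prescribes an action
available to `a` at the last state of the history. -/
def IsStrategy {P : Type} (C : CGS P) (a : Fin C.k) (s : List C.Q → ℕ) : Prop :=
  ∀ (l : List C.Q) (hl : l ≠ []), 1 ≤ s l ∧ s l ≤ C.d (l.getLast hl) a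

/-- The history `ρ[0]⋯ρ[i]` of a play. -/
def hist {Q : Type} (ρ : ℕ → Q) (i : ℕ) : List Q := (List.range (i + 1)).map ρ

/-- `ρ` is an outcome from `q` compatible with the strategies `s a` of the agents
`a` of the coalition `A` (agents are numbered `1, …, k`): at every step, the next
state is obtained by a valid tuple of actions whose components for coalition
members are prescribed by their strategies. -/
def Outcome {P : Type} (C : CGS P) (A : Finset ℕ) (s : Fin C.k → List C.Q → ℕ)
    (q : C.Q) (ρ : ℕ → C.Q) : Prop :=
  ρ 0 = q ∧ ∀ i : ℕ, ∃ β : Fin C.k → ℕ,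
    (∀ a : Fin C.k, 1 ≤ β a ∧ β a ≤ C.d (ρ i) a) ∧
    (∀ a : Fin C.k, (a.val + 1) ∈ A → β a = s a (hist ρ i)) ∧
    ρ (i + 1) = C.δ (ρ i) β

/-- Formulas of alternating-time temporal logic `ATL(Prop)`:
`φ ::= p | ¬φ | φ∨φ | φ∧φ | ⟨⟨A⟩⟩Xφ | ⟨⟨A⟩⟩Fφ | ⟨⟨A⟩⟩Gφ | ⟨⟨A⟩⟩(φUφ)`,
where `A` is a finite set of agent indices. -/
inductive ATL (P : Type) : Type
  | atom : P → ATL P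
  | not : ATL P → ATL P
  | or : ATL P → ATL P → ATL P
  | and : ATL P → ATL P → ATL P
  | cnext : Finset ℕ → ATL P → ATL P
  | cfut : Finset ℕ → ATL P → ATL P
  | cglob : Finset ℕ → ATL P → ATL P
  | cuntil : Finset ℕ → ATL P → ATL P → ATL P

/-- Satisfaction of an `ATL` formula at a state of a concurrent game structure. -/
def ATLsat {P : Type} (C : CGS P) : ATL P → C.Q → Prop
  | .atom p, q => p ∈ C.π q
  | .not φ, q => ¬ ATLsat C φ q
  | .or φ ψ, q => ATLsat C φ q ∨ ATLsat C ψ q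
  | .and φ ψ, q => ATLsat C φ q ∧ ATLsat C ψ q
  | .cnext A φ, q => ∃ s : Fin C.k → List C.Q → ℕ,
      (∀ a : Fin C.k, (a.val + 1) ∈ A → IsStrategy C a (s a)) ∧
      ∀ ρ : ℕ → C.Q, Outcome C A s q ρ → ATLsat C φ (ρ 1)
  | .cfut A φ, q => ∃ s : Fin C.k → List C.Q → ℕ,
      (∀ a : Fin C.k, (a.val + 1) ∈ A → IsStrategy C a (s a)) ∧
      ∀ ρ : ℕ → C.Q, Outcome C A s q ρ → ∃ i, ATLsat C φ (ρ i)
  | .cglob A φ, q => ∃ s : Fin C.k → List C.Q → ℕ,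
      (∀ a : Fin C.k, (a.val + 1) ∈ A → IsStrategy C a (s a)) ∧
      ∀ ρ : ℕ → C.Q, Outcome C A s q ρ → ∀ i, ATLsat C φ (ρ i)
  | .cuntil A φ ψ, q => ∃ s : Fin C.k → List C.Q → ℕ,
      (∀ a : Fin C.k, (a.val + 1) ∈ A → IsStrategy C a (s a)) ∧
      ∀ ρ : ℕ → C.Q, Outcome C A s q ρ →
        ∃ i, ATLsat C ψ (ρ i) ∧ ∀ j < i, ATLsat C φ (ρ j)

/-- `C ⊨ φ`: every initial state satisfies `φ`. -/
def ATLsatC {P : Type} (C : CGS P) (φ : ATL P) : Prop :=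
  ∀ q ∈ C.I, ATLsat C φ q

/-- A fragment of `ATL(Prop)`: a subset of its operators (atomic propositions,
`¬`, `∨`, `∧`, and for each temporal operator the set of allowed coalitions). -/
structure ATLFragment (P : Type) where
  atoms : Set P
  hasNot : Prop
  hasOr : Prop
  hasAnd : Prop
  nextC : Set (Finset ℕ)
  futC : Set (Finset ℕ)
  globC : Set (Finset ℕ)
  untilC : Set (Finset ℕ)

/-- A formula belongs to the fragment if it is built using only its operators. -/
def ATLFragment.Mem {P : Type} (F : ATLFragment P) : ATL P → Prop
  | .atom p => p ∈ F.atoms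
  | .not φ => F.hasNot ∧ F.Mem φ
  | .or φ ψ => F.hasOr ∧ F.Mem φ ∧ F.Mem ψ
  | .and φ ψ => F.hasAnd ∧ F.Mem φ ∧ F.Mem ψ
  | .cnext A φ => A ∈ F.nextC ∧ F.Mem φ
  | .cfut A φ => A ∈ F.futC ∧ F.Mem φ
  | .cglob A φ => A ∈ F.globC ∧ F.Mem φ
  | .cuntil A φ ψ => A ∈ F.untilC ∧ F.Mem φ ∧ F.Mem ψ

/-- The set of subformulas of an `ATL` formula. -/
def ATLSub {P : Type} : ATL P → Set (ATL P)
  | .atom p => {.atom p}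
  | .not φ => insert (.not φ) (ATLSub φ)
  | .or φ ψ => insert (.or φ ψ) (ATLSub φ ∪ ATLSub ψ)
  | .and φ ψ => insert (.and φ ψ) (ATLSub φ ∪ ATLSub ψ)
  | .cnext A φ => insert (.cnext A φ) (ATLSub φ)
  | .cfut A φ => insert (.cfut A φ) (ATLSub φ)
  | .cglob A φ => insert (.cglob A φ) (ATLSub φ)
  | .cuntil A φ ψ => insert (.cuntil A φ ψ) (ATLSub φ ∪ ATLSub ψ)

/-- The (syntax-DAG) size of an `ATL` formula: its number of distinct subformulas. -/
noncomputable def ATLsz {P : Type} (φ : ATL P) : ℕ := (ATLSub φ).ncard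

theorem card_pi_set_Q {P : Type} (S : Finset (CGS P)) :
    Nat.card (∀ C : S, Set (C : CGS P).Q) = 2 ^ ∑ C ∈ S, Fintype.card C.Q := by
  simp only [Nat.card_eq_fintype_card, Fintype.card_pi, Fintype.card_set,
    Finset.prod_pow_eq_pow_sum]
  rw [Finset.sum_coe_sort S fun C => Fintype.card C.Q]

namespace ATL

variable {P : Type}

theorem mem_ATLSub_self (φ : ATL P) : φ ∈ ATLSub φ := by
  cases φ <;> simp [ATLSub]

theorem finite_ATLSub (φ : ATL P) : (ATLSub φ).Finite := by
  induction φ <;> simp_all [ATLSub]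

theorem ATLSub_subset_of_mem {φ ψ : ATL P} (h : ψ ∈ ATLSub φ) : ATLSub ψ ⊆ ATLSub φ := by
  induction φ with
  | atom p => simp_all [ATLSub]
  | _ =>
    simp only [ATLSub, Set.mem_insert_iff, Set.mem_union] at h ⊢
    rcases h with rfl | h
    · simp [ATLSub]
    · grind

theorem eq_or_sizeOf_lt_of_mem_ATLSub {φ ψ : ATL P} (h : ψ ∈ ATLSub φ) :
    ψ = φ ∨ sizeOf ψ < sizeOf φ := by
  induction φ <;> simp only [ATLSub, Set.mem_insert_iff, Set.mem_union, Set.mem_singleton_iff] at h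
  all_goals grind

theorem eq_of_mem_ATLSub_of_mem_ATLSub {φ ψ : ATL P} (h₁ : ψ ∈ ATLSub φ) (h₂ : φ ∈ ATLSub ψ) :
    ψ = φ := by
  have := eq_or_sizeOf_lt_of_mem_ATLSub h₁
  have := eq_or_sizeOf_lt_of_mem_ATLSub h₂
  grind

noncomputable def subst (σ τ : ATL P) : ATL P → ATL P
  | .atom p => if .atom p = σ then τ else .atom p
  | .not φ => if .not φ = σ then τ else .not (subst σ τ φ)
  | .or φ ψ => if .or φ ψ = σ then τ else .or (subst σ τ φ) (subst σ τ ψ)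
  | .and φ ψ => if .and φ ψ = σ then τ else .and (subst σ τ φ) (subst σ τ ψ)
  | .cnext A φ => if .cnext A φ = σ then τ else .cnext A (subst σ τ φ)
  | .cfut A φ => if .cfut A φ = σ then τ else .cfut A (subst σ τ φ)
  | .cglob A φ => if .cglob A φ = σ then τ else .cglob A (subst σ τ φ)
  | .cuntil A φ ψ => if .cuntil A φ ψ = σ then τ else .cuntil A (subst σ τ φ) (subst σ τ ψ)

section subst

variable {σ τ : ATL P}

@[simp]
theorem subst_self : subst σ τ σ = τ := by
  cases σ <;> simp [subst]

theorem subst_eq_self_of_not_mem_ATLSub {φ : ATL P} (h : σ ∉ ATLSub φ) : subst σ τ φ = φ := by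
  induction φ <;>
    simp only [ATLSub, Set.mem_insert_iff, Set.mem_union, Set.mem_singleton_iff, not_or] at h
  all_goals grind [subst]

theorem ATLSub_subst_subset (φ : ATL P) :
    ATLSub (subst σ τ φ) ⊆ subst σ τ '' ATLSub φ ∪ ATLSub τ := by
  induction φ <;> simp only [subst] <;> split_ifs
  all_goals first
    | exact Set.subset_union_right
    | simp only [ATLSub, Set.subset_def, Set.mem_insert_iff, Set.mem_union, Set.mem_image,
        Set.mem_singleton_iff] at *
      grind [subst]

theorem ATLsat_subst_iff (C : CGS P) (h : ∀ q, ATLsat C σ q ↔ ATLsat C τ q) (φ : ATL P)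
    (q : C.Q) : ATLsat C (subst σ τ φ) q ↔ ATLsat C φ q := by
  induction φ generalizing q <;> simp only [subst] <;> split_ifs with hφ
  all_goals first
    | (subst hφ; exact (h q).symm)
    | simp only [ATLsat, *]

theorem ATLsz_subst_lt {φ : ATL P} (hσ : σ ∈ ATLSub φ) (hτ : τ ∈ ATLSub φ) (hne : σ ≠ τ)
    (hστ : σ ∉ ATLSub τ) : ATLsz (subst σ τ φ) < ATLsz φ := by
  have hfix : ∀ ψ ∈ ATLSub τ, subst σ τ ψ = ψ := fun ψ hψ =>
    subst_eq_self_of_not_mem_ATLSub fun h => hστ (ATLSub_subset_of_mem hψ h)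
  -- `σ` itself is not needed as a preimage: its image `τ` is also the image of `τ`.
  have hsub : ATLSub (subst σ τ φ) ⊆ subst σ τ '' (ATLSub φ \ {σ}) := by
    intro x hx
    rcases ATLSub_subst_subset φ hx with ⟨y, hy, rfl⟩ | hx
    · by_cases hyσ : y = σ
      · subst hyσ
        exact ⟨τ, ⟨hτ, hne.symm⟩, by rw [subst_self, hfix τ (mem_ATLSub_self τ)]⟩
      · exact ⟨y, ⟨hy, hyσ⟩, rfl⟩
    · exact ⟨x, ⟨ATLSub_subset_of_mem hτ hx, fun h => hστ (h ▸ hx)⟩, hfix x hx⟩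
  have hfin := finite_ATLSub φ
  calc ATLsz (subst σ τ φ)
      ≤ (subst σ τ '' (ATLSub φ \ {σ})).ncard := Set.ncard_le_ncard hsub (hfin.sdiff.image _)
    _ ≤ (ATLSub φ \ {σ}).ncard := Set.ncard_image_le hfin.sdiff
    _ < ATLsz φ := Set.ncard_sdiff_singleton_lt_of_mem hσ hfin

end subst

def EquivOn (S : Finset (CGS P)) (φ ψ : ATL P) : Prop :=
  ∀ C ∈ S, ∀ q : C.Q, ATLsat C φ q ↔ ATLsat C ψ q

theorem EquivOn.trans {S : Finset (CGS P)} {φ ψ χ : ATL P} (h₁ : EquivOn S φ ψ)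
    (h₂ : EquivOn S ψ χ) : EquivOn S φ χ :=
  fun C hC q => (h₁ C hC q).trans (h₂ C hC q)

theorem EquivOn.ATLsatC_iff {S : Finset (CGS P)} {φ ψ : ATL P} (h : EquivOn S φ ψ)
    {C : CGS P} (hC : C ∈ S) : ATLsatC C φ ↔ ATLsatC C ψ :=
  forall₂_congr fun q _ => h C hC q

theorem exists_equivOn_of_two_pow_lt_ATLsz (S : Finset (CGS P)) {φ : ATL P}
    (h : 2 ^ ∑ C ∈ S, Fintype.card C.Q < ATLsz φ) :
    ∃ σ ∈ ATLSub φ, ∃ τ ∈ ATLSub φ, σ ≠ τ ∧ σ ∉ ATLSub τ ∧ EquivOn S σ τ := by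
  obtain ⟨σ, hσ, τ, hτ, hne, hprof⟩ :=
    Set.exists_ne_map_eq_of_ncard_lt_of_maps_to (s := ATLSub φ) (t := Set.univ)
      (f := fun ψ (C : S) => {q : (C : CGS P).Q | ATLsat (C : CGS P) ψ q})
      (by rwa [Set.ncard_univ, card_pi_set_Q]) (fun _ _ => Set.mem_univ _)
  have hequiv : EquivOn S σ τ := fun C hC q => Set.ext_iff.mp (congrFun hprof ⟨C, hC⟩) q
  by_cases hστ : σ ∈ ATLSub τ
  · refine ⟨τ, hτ, σ, hσ, hne.symm, fun hτσ => hne ?_, fun C hC q => (hequiv C hC q).symm⟩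
    exact eq_of_mem_ATLSub_of_mem_ATLSub hστ hτσ
  · exact ⟨σ, hσ, τ, hτ, hne, hστ, hequiv⟩

end ATL

namespace ATLFragment.Mem

variable {P : Type} {F : ATLFragment P} {φ : ATL P}

theorem of_mem_ATLSub (hφ : F.Mem φ) {ψ : ATL P} (h : ψ ∈ ATLSub φ) : F.Mem ψ := by
  induction φ <;> simp only [ATLSub, Set.mem_insert_iff, Set.mem_union, Set.mem_singleton_iff] at h
  all_goals grind [ATLFragment.Mem]

theorem subst {σ τ : ATL P} (hφ : F.Mem φ) (hτ : F.Mem τ) : F.Mem (ATL.subst σ τ φ) := by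
  induction φ <;> simp only [ATL.subst] <;> split_ifs <;> simp_all [ATLFragment.Mem]

end ATLFragment.Mem


theorem ATL.exists_equivOn_ATLsz_le {P : Type} {F : ATLFragment P} (S : Finset (CGS P))
    {φ : ATL P} (hφ : F.Mem φ) :
    ∃ ψ, F.Mem ψ ∧ ATL.EquivOn S ψ φ ∧ ATLsz ψ ≤ 2 ^ ∑ C ∈ S, Fintype.card C.Q := by
  by_cases hle : ATLsz φ ≤ 2 ^ ∑ C ∈ S, Fintype.card C.Q
  · exact ⟨φ, hφ, fun _ _ _ => Iff.rfl, hle⟩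
  obtain ⟨σ, hσ, τ, hτ, hne, hστ, hequiv⟩ := exists_equivOn_of_two_pow_lt_ATLsz S (not_le.mp hle)
  obtain ⟨ψ, hψ, hψφ, hsz⟩ := exists_equivOn_ATLsz_le S (hφ.subst (hφ.of_mem_ATLSub hτ))
  exact ⟨ψ, hψ, hψφ.trans fun C hC => ATLsat_subst_iff C (hequiv C hC) φ, hsz⟩
termination_by ATLsz φ
decreasing_by exact ATLsz_subst_lt hσ hτ hne hστ

theorem atl_separating_size_general (P : Type) (F : ATLFragment P) (Pos Neg : Finset (CGS P)) :
    (∃ φ : ATL P, F.Mem φ ∧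
        (∀ C ∈ Pos, ATLsatC C φ) ∧ (∀ C ∈ Neg, ¬ ATLsatC C φ)) →
    ∃ φ : ATL P, F.Mem φ ∧
        (∀ C ∈ Pos, ATLsatC C φ) ∧ (∀ C ∈ Neg, ¬ ATLsatC C φ) ∧
        ATLsz φ ≤ 2 ^ (∑ C ∈ Pos ∪ Neg, Fintype.card C.Q) := by
  rintro ⟨φ, hφ, hPos, hNeg⟩
  obtain ⟨ψ, hψ, hψφ, hsz⟩ := ATL.exists_equivOn_ATLsz_le (Pos ∪ Neg) hφ
  refine ⟨ψ, hψ, fun C hC => ?_, fun C hC => ?_, hsz⟩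
  · exact (hψφ.ATLsatC_iff (Finset.mem_union_left _ hC)).2 (hPos C hC)
  · exact (hψφ.ATLsatC_iff (Finset.mem_union_right _ hC)).not.2 (hNeg C hC)

/-- **Corollary.** For any fragment of `ATL(Prop)` and any sample `(Pos, Neg)` of
concurrent game structures: if some fragment formula separates the sample, then
one of size at most `2^n` does, where `n` is the total number of states of the
sample. -/
theorem atl_separating_size (P : Type) [Finite P] (hP : Nonempty P)
    (F : ATLFragment P) (Pos Neg : Finset (CGS P)) :
    (∃ φ : ATL P, F.Mem φ ∧
        (∀ C ∈ Pos, ATLsatC C φ) ∧ (∀ C ∈ Neg, ¬ ATLsatC C φ)) →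
    ∃ φ : ATL P, F.Mem φ ∧
        (∀ C ∈ Pos, ATLsatC C φ) ∧ (∀ C ∈ Neg, ¬ ATLsatC C φ) ∧
        ATLsz φ ≤ 2 ^ (∑ C ∈ Pos ∪ Neg, Fintype.card C.Q) :=
  atl_separating_size_general P F Pos Neg
end

section
/- Let Σ be a non-empty alphabet and let 𝒫, 𝒩 be finite sets of parity automata over Σ. If there exists a non-empty finite word v ∈ Σ^+ such that the periodic word v^ω is accepted by every automaton in 𝒫 and rejected by every automaton in 𝒩, then there exists such a word v' with |v'| ≤ 2^k, where k := Σ_{A ∈ 𝒫∪𝒩} |Q_A|² · n_A and n_A := |π_A(Q_A)| is the number of distinct priorities of A. -/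
open scoped Classical

/-- A parity automaton over the alphabet `σ`: a finite non-empty set of states,
initial states, a transition function and a priority function. -/
structure PAut (σ : Type) where
  Q : Type
  [finQ : Fintype Q]
  neQ : Nonempty Q
  I : Set Q
  δ : Q → σ → Set Q
  pri : Q → ℕ

attribute [instance] PAut.finQ

/-- A run of `A` on the infinite word `w`. -/
def IsRun {σ : Type} (A : PAut σ) (w : ℕ → σ) (ρ : ℕ → A.Q) : Prop :=
  ρ 0 ∈ A.I ∧ ∀ i, ρ (i + 1) ∈ A.δ (ρ i) (w i)

/-- The priority `n` occurs infinitely often along the run `ρ`. -/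
def InfOcc {σ : Type} (A : PAut σ) (ρ : ℕ → A.Q) (n : ℕ) : Prop :=
  ∀ i, ∃ j, i ≤ j ∧ A.pri (ρ j) = n

/-- `A` accepts the infinite word `w`: some run of `A` on `w` is such that the
maximal priority occurring infinitely often along it is even. -/
def PAccepts {σ : Type} (A : PAut σ) (w : ℕ → σ) : Prop :=
  ∃ ρ : ℕ → A.Q, IsRun A w ρ ∧
    ∃ n, InfOcc A ρ n ∧ Even n ∧ ∀ m, InfOcc A ρ m → m ≤ n

/-- The periodic infinite word `v^ω`. -/
def periodicWord {σ : Type} (v : List σ) (hv : v ≠ []) : ℕ → σ :=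
  fun i => v.get ⟨i % v.length, Nat.mod_lt _ (List.length_pos_iff.mpr hv)⟩

/-- The number of distinct priorities of `A`. -/
noncomputable def numPri {σ : Type} (A : PAut σ) : ℕ :=
  (Finset.univ.image A.pri).card

/-!
The profile of a finite word `u` in `A` records for which states `p`, `q` and priorities `m` the
automaton can read `u` from `p` to `q` with `m` the maximal priority seen. Profiles are
compositional, and the profile of `u` determines whether `A` accepts `u^ω`: cut a run on `u^ω`
into blocks of length `|u|`, replace every block by a path for another word with the same
profile, and note that the largest priority seen infinitely often is the limsup of the block
maxima. Nonempty words have at most `2^k` profile vectors for the automata in `𝒫 ∪ 𝒩`, so if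
`|v| > 2^k` two prefixes `v[:i]`, `v[:j]` with `i < j` share one, and deleting `v[i:j]` gives a
shorter word with the same profiles.
-/

open Filter

theorem Finset.sup_Ioc_add {α : Type*} [SemilatticeSup α] [OrderBot α] (g : ℕ → α)
    (a n : ℕ) :
    (Finset.Ioc a (a + n)).sup g = (Finset.Ioc 0 n).sup fun r => g (a + r) := by
  have := Finset.sup_map (Finset.Ioc 0 n) (addLeftEmbedding a) g
  rwa [Finset.map_add_left_Ioc, add_zero] at this

theorem mem_Ioc_pred_div_mul {L i : ℕ} (hL : 0 < L) (hi : 0 < i) :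
    i ∈ Finset.Ioc ((i - 1) / L * L) ((i - 1) / L * L + L) := by
  have := Nat.div_mul_le_self (i - 1) L
  have := Nat.lt_div_mul_add (a := i - 1) hL
  rw [Finset.mem_Ioc]
  omega

def IsLimsup (g : ℕ → ℕ) (n : ℕ) : Prop :=
  (∀ᶠ i in atTop, g i ≤ n) ∧ ∃ᶠ i in atTop, g i = n

theorem isLimsup_iff_isGreatest {g : ℕ → ℕ} (hg : (Set.range g).Finite) {n : ℕ} :
    IsLimsup g n ↔ IsGreatest {m | ∃ᶠ i in atTop, g i = m} n := by
  refine ⟨fun ⟨hle, hfreq⟩ => ⟨hfreq, fun m hm => ?_⟩, fun ⟨hfreq, hmax⟩ => ⟨?_, hfreq⟩⟩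
  · obtain ⟨i, rfl, hi⟩ := (hm.and_eventually hle).exists
    exact hi
  · have hvals : ∀ m ∈ Set.range g, ∀ᶠ i in atTop, g i = m → m ≤ n := by
      intro m _
      by_cases hm : ∃ᶠ i in atTop, g i = m
      · exact Eventually.of_forall fun _ _ => hmax hm
      · exact (not_frequently.1 hm).mono fun _ hi h => absurd h hi
    filter_upwards [hg.eventually_all.2 hvals] with i hi
    exact hi _ ⟨i, rfl⟩ rfl

theorem isLimsup_blockSup_iff {g : ℕ → ℕ} {L : ℕ} (hL : 0 < L) {n : ℕ} :
    IsLimsup (fun t => (Finset.Ioc (t * L) (t * L + L)).sup g) n ↔ IsLimsup g n := by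
  have hblock : Tendsto (fun i => (i - 1) / L) atTop atTop :=
    tendsto_atTop_atTop.2 fun T => ⟨T * L + 1, fun i hi =>
      (Nat.le_div_iff_mul_le hL).2 (by omega)⟩
  have hle_mem : ∀ t, ∀ i ∈ Finset.Ioc (t * L) (t * L + L), t ≤ i := fun t i hi =>
    (Nat.le_mul_of_pos_right t hL).trans (Finset.mem_Ioc.1 hi).1.le
  constructor
  · rintro ⟨hle, hfreq⟩
    refine ⟨?_, ?_⟩
    · filter_upwards [hblock.eventually hle, eventually_gt_atTop 0] with i hi hi0
      exact (Finset.le_sup (mem_Ioc_pred_div_mul hL hi0)).trans hi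
    · rw [frequently_atTop] at hfreq ⊢
      intro a
      obtain ⟨t, hat, ht⟩ := hfreq a
      obtain ⟨i, hi, hgi⟩ := Finset.exists_mem_eq_sup _
        (Finset.nonempty_Ioc.2 (Nat.lt_add_of_pos_right hL)) g
      exact ⟨i, hat.trans (hle_mem t i hi), hgi ▸ ht⟩
  · rintro ⟨hle, hfreq⟩
    have hle' : ∀ᶠ t in atTop, (Finset.Ioc (t * L) (t * L + L)).sup g ≤ n := by
      obtain ⟨K, hK⟩ := eventually_atTop.1 hle
      exact eventually_atTop.2 ⟨K, fun t ht => Finset.sup_le fun i hi =>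
        hK i (ht.trans (hle_mem t i hi))⟩
    refine ⟨hle', ?_⟩
    have hge : ∃ᶠ t in atTop, n ≤ (Finset.Ioc (t * L) (t * L + L)).sup g :=
      hblock.frequently <| (hfreq.and_eventually (eventually_gt_atTop 0)).mono
        fun i ⟨hi, hi0⟩ => hi ▸ Finset.le_sup (mem_Ioc_pred_div_mul hL hi0)
    exact (hge.and_eventually hle').mono fun _ ⟨h₁, h₂⟩ => le_antisymm h₂ h₁

def concatPaths {α : Type*} (L : ℕ) (g : ℕ → ℕ → α) : ℕ → α :=
  fun i => g (i / L) (i % L)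

theorem concatPaths_mul_add {α : Type*} {L : ℕ} (hL : 0 < L) {g : ℕ → ℕ → α}
    (hlink : ∀ t, g t L = g (t + 1) 0) (t : ℕ) {r : ℕ} (hr : r ≤ L) :
    concatPaths L g (t * L + r) = g t r := by
  unfold concatPaths
  rcases hr.lt_or_eq with hr | rfl
  · rw [mul_comm, Nat.mul_add_div hL, Nat.mul_add_mod, Nat.div_eq_of_lt hr, Nat.mod_eq_of_lt hr,
      add_zero]
  · rw [← Nat.succ_mul, Nat.mul_div_cancel _ hL, Nat.mul_mod_left, hlink]

theorem sup_Ioc_comp_concatPaths {α : Type*} (f : α → ℕ) {L : ℕ} (hL : 0 < L) {g : ℕ → ℕ → α}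
    (hlink : ∀ t, g t L = g (t + 1) 0) (t : ℕ) :
    (Finset.Ioc (t * L) (t * L + L)).sup (f ∘ concatPaths L g) =
      (Finset.Ioc 0 L).sup (f ∘ g t) := by
  rw [Finset.sup_Ioc_add]
  exact Finset.sup_congr rfl fun r hr => by
    simp only [Function.comp, concatPaths_mul_add hL hlink t (Finset.mem_Ioc.1 hr).2]

theorem periodicWord_mul_add {σ : Type} {v : List σ} (hv : v ≠ []) (t : ℕ) {r : ℕ}
    (hr : r < v.length) : periodicWord v hv (t * v.length + r) = v[r] := by
  simp only [periodicWord, List.get_eq_getElem, mul_comm t, Nat.mul_add_mod, Nat.mod_eq_of_lt hr]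

namespace PAut

variable {σ : Type}

section

variable (A : PAut σ)

/-- The priority of the first state of the path does not count, so `m = 0` when `u = []`. -/
def Profile (u : List σ) (p q : A.Q) (m : ℕ) : Prop :=
  ∃ f : ℕ → A.Q, f 0 = p ∧ f u.length = q ∧
    (∀ i (h : i < u.length), f (i + 1) ∈ A.δ (f i) u[i]) ∧
    (Finset.Ioc 0 u.length).sup (A.pri ∘ f) = m

theorem profile_append (u w : List σ) (p q : A.Q) (m : ℕ) :
    A.Profile (u ++ w) p q m ↔
      ∃ r m₁ m₂, A.Profile u p r m₁ ∧ A.Profile w r q m₂ ∧ max m₁ m₂ = m := by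
  have hsup : ∀ f : ℕ → A.Q, (Finset.Ioc 0 (u ++ w).length).sup (A.pri ∘ f) =
      max ((Finset.Ioc 0 u.length).sup (A.pri ∘ f))
        ((Finset.Ioc 0 w.length).sup (A.pri ∘ fun r => f (u.length + r))) := fun f => by
    rw [List.length_append, ← Finset.Ioc_union_Ioc_eq_Ioc (Nat.zero_le _) (Nat.le_add_right _ _),
      Finset.sup_union, Finset.sup_Ioc_add]
    rfl
  constructor
  · rintro ⟨f, rfl, rfl, hstep, rfl⟩
    refine ⟨f u.length, _, _, ⟨f, rfl, rfl, fun i h => ?_, rfl⟩,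
      ⟨fun r => f (u.length + r), rfl, by simp, fun i h => ?_, rfl⟩, (hsup f).symm⟩
    · have := hstep i (by simp; omega)
      rwa [List.getElem_append_left h] at this
    · have := hstep (u.length + i) (by simp; omega)
      simpa only [List.getElem_append_right (Nat.le_add_right _ _), Nat.add_sub_cancel_left,
        Nat.add_assoc] using this
  · rintro ⟨r, m₁, m₂, ⟨f₁, rfl, rfl, hstep₁, rfl⟩, ⟨f₂, hf₂, rfl, hstep₂, rfl⟩, rfl⟩
    set f : ℕ → A.Q := fun i => if i ≤ u.length then f₁ i else f₂ (i - u.length)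
    have hf₁ : ∀ i ≤ u.length, f i = f₁ i := fun i hi => if_pos hi
    have hf₂ : ∀ r, f (u.length + r) = f₂ r := by
      rintro (_ | r)
      · simp [f, hf₂]
      · simp [f]
    refine ⟨f, hf₁ 0 (Nat.zero_le _), by simpa using hf₂ w.length, fun i h => ?_, ?_⟩
    · rcases lt_or_ge i u.length with hi | hi
      · rw [hf₁ _ hi, hf₁ _ hi.le, List.getElem_append_left hi]
        exact hstep₁ i hi
      · obtain ⟨r, rfl⟩ := Nat.exists_eq_add_of_le hi
        simpa only [Nat.add_assoc, hf₂, List.getElem_append_right hi, Nat.add_sub_cancel_left]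
          using hstep₂ r (by simp at h; omega)
    · rw [hsup]
      congr 1
      · exact Finset.sup_congr rfl fun i hi => by
          simp only [Function.comp, hf₁ i (Finset.mem_Ioc.1 hi).2]
      · simp only [hf₂]

theorem profile_append_congr {u u' : List σ} (h : A.Profile u = A.Profile u') (w : List σ) :
    A.Profile (u ++ w) = A.Profile (u' ++ w) := by
  funext p q m
  rw [eq_iff_iff, profile_append, profile_append, h]

theorem Profile.mem_image_pri {u : List σ} (hu : u ≠ []) {p q : A.Q} {m : ℕ}
    (h : A.Profile u p q m) : m ∈ Finset.univ.image A.pri := by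
  obtain ⟨f, -, -, -, rfl⟩ := h
  obtain ⟨i, -, hi⟩ := Finset.exists_mem_eq_sup _
    (Finset.nonempty_Ioc.2 (List.length_pos_iff.2 hu)) (A.pri ∘ f)
  exact hi ▸ Finset.mem_image_of_mem _ (Finset.mem_univ _)

theorem paccepts_iff_exists_isLimsup {w : ℕ → σ} :
    PAccepts A w ↔ ∃ ρ, IsRun A w ρ ∧ ∃ n, Even n ∧ IsLimsup (A.pri ∘ ρ) n := by
  refine exists_congr fun ρ => and_congr_right fun _ => exists_congr fun n => ?_
  have hfin : (Set.range (A.pri ∘ ρ)).Finite :=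
    (Set.finite_range A.pri).subset (Set.range_comp_subset_range ρ A.pri)
  have hocc : ∀ m, InfOcc A ρ m ↔ ∃ᶠ i in atTop, (A.pri ∘ ρ) i = m := fun m =>
    frequently_atTop.symm
  simp only [isLimsup_iff_isGreatest hfin, IsGreatest, upperBounds, Set.mem_ofPred_eq, hocc]
  tauto

theorem profile_of_isRun {u : List σ} (hu : u ≠ []) {ρ : ℕ → A.Q}
    (hρ : IsRun A (periodicWord u hu) ρ) (t : ℕ) :
    A.Profile u (ρ (t * u.length)) (ρ (t * u.length + u.length))
      ((Finset.Ioc (t * u.length) (t * u.length + u.length)).sup (A.pri ∘ ρ)) := by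
  refine ⟨fun r => ρ (t * u.length + r), rfl, rfl, fun i h => ?_,
    (Finset.sup_Ioc_add (A.pri ∘ ρ) _ _).symm⟩
  simpa only [periodicWord_mul_add hu t h, Nat.add_assoc] using hρ.2 (t * u.length + i)

theorem isRun_concatPaths {w : List σ} (hw : w ≠ []) {g : ℕ → ℕ → A.Q} (h₀ : g 0 0 ∈ A.I)
    (hstep : ∀ t i (h : i < w.length), g t (i + 1) ∈ A.δ (g t i) w[i])
    (hlink : ∀ t, g t w.length = g (t + 1) 0) :
    IsRun A (periodicWord w hw) (concatPaths w.length g) := by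
  have hL := List.length_pos_iff.2 hw
  refine ⟨by simpa [concatPaths] using h₀, fun i => ?_⟩
  obtain ⟨t, r, hr, rfl⟩ : ∃ t r, r < w.length ∧ i = t * w.length + r :=
    ⟨i / w.length, i % w.length, Nat.mod_lt _ hL, (Nat.div_add_mod' i _).symm⟩
  rw [Nat.add_assoc, concatPaths_mul_add hL hlink t hr, concatPaths_mul_add hL hlink t hr.le,
    periodicWord_mul_add hw t hr]
  exact hstep t r hr

theorem paccepts_periodicWord_of_profile_le {u w : List σ} (hu : u ≠ []) (hw : w ≠ [])
    (h : A.Profile u ≤ A.Profile w)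
    (hacc : PAccepts A (periodicWord u hu)) : PAccepts A (periodicWord w hw) := by
  rw [paccepts_iff_exists_isLimsup] at hacc ⊢
  obtain ⟨ρ, hρ, n, hn, hlim⟩ := hacc
  choose g hg₀ hgL hstep hsup using fun t => h _ _ _ (A.profile_of_isRun hu hρ t)
  have hlink : ∀ t, g t w.length = g (t + 1) 0 := fun t => by rw [hgL, hg₀, Nat.succ_mul]
  have hwL := List.length_pos_iff.2 hw
  refine ⟨_, A.isRun_concatPaths hw (by simpa [hg₀] using hρ.1) hstep hlink, n, hn, ?_⟩
  rw [← isLimsup_blockSup_iff (List.length_pos_iff.2 hu)] at hlim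
  rw [← isLimsup_blockSup_iff hwL]
  simpa only [sup_Ioc_comp_concatPaths _ hwL hlink, hsup] using hlim

theorem paccepts_periodicWord_congr {u w : List σ} (hu : u ≠ []) (hw : w ≠ [])
    (h : A.Profile u = A.Profile w) :
    PAccepts A (periodicWord u hu) ↔ PAccepts A (periodicWord w hw) :=
  ⟨A.paccepts_periodicWord_of_profile_le hu hw h.le,
    A.paccepts_periodicWord_of_profile_le hw hu h.ge⟩

end

/-- Recording profiles only at priorities that occur is what brings the count down to
`2 ^ (|Q|² · n_A)` per automaton; for `u ≠ []` nothing is lost (`Profile.mem_image_pri`). -/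
def profileVector (S : Finset (PAut σ)) (u : List σ) :
    (A : S) → A.1.Q → A.1.Q → Finset.univ.image A.1.pri → Prop :=
  fun A p q m => A.1.Profile u p q m

theorem card_profileVector_type (S : Finset (PAut σ)) :
    Fintype.card ((A : S) → A.1.Q → A.1.Q → Finset.univ.image A.1.pri → Prop) =
      2 ^ (∑ A ∈ S, Fintype.card A.Q ^ 2 * numPri A) := by
  simp only [Fintype.card_pi, Fintype.card_prop, Finset.prod_const, Finset.card_univ,
    Finset.card_attach, ← pow_mul, Finset.univ_eq_attach]
  rw [Finset.prod_attach S fun A =>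
      2 ^ ((Finset.univ.image A.pri).card * Fintype.card A.Q * Fintype.card A.Q),
    ← Finset.prod_pow_eq_pow_sum]
  exact Finset.prod_congr rfl fun A _ => by rw [numPri]; ring

theorem profile_eq_of_profileVector_eq {S : Finset (PAut σ)} {u w : List σ} (hu : u ≠ [])
    (hw : w ≠ []) (h : profileVector S u = profileVector S w) {A : PAut σ} (hA : A ∈ S) :
    A.Profile u = A.Profile w := by
  funext p q m
  by_cases hm : m ∈ Finset.univ.image A.pri
  · exact congrFun (congrFun (congrFun (congrFun h ⟨A, hA⟩) p) q) ⟨m, hm⟩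
  · exact eq_iff_iff.2 ⟨fun h' => absurd (h'.mem_image_pri A hu) hm,
      fun h' => absurd (h'.mem_image_pri A hw) hm⟩

theorem exists_shorter_profile_eq (S : Finset (PAut σ)) {v : List σ}
    (hlong : 2 ^ (∑ A ∈ S, Fintype.card A.Q ^ 2 * numPri A) < v.length) :
    ∃ w, w ≠ [] ∧ w.length < v.length ∧ ∀ A ∈ S, A.Profile w = A.Profile v := by
  have hcard : Fintype.card ((A : S) → A.1.Q → A.1.Q → Finset.univ.image A.1.pri → Prop) <
      Fintype.card (Fin v.length) := by
    rwa [card_profileVector_type, Fintype.card_fin]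
  obtain ⟨i, j, hne, heq⟩ :=
    Fintype.exists_ne_map_eq_of_card_lt (fun i : Fin v.length => profileVector S (v.take (i + 1)))
      hcard
  obtain ⟨i, j, hij, heq⟩ : ∃ i j : Fin v.length, i < j ∧
      profileVector S (v.take (i + 1)) = profileVector S (v.take (j + 1)) := by
    rcases hne.lt_or_gt with h | h
    exacts [⟨i, j, h, heq⟩, ⟨j, i, h, heq.symm⟩]
  have htake : ∀ k : Fin v.length, v.take (k + 1) ≠ [] := fun k => by
    simp [List.take_eq_nil_iff, List.ne_nil_of_length_pos (k.pos)]
  refine ⟨v.take (i + 1) ++ v.drop (j + 1), by simp [htake i], ?_, fun A hA => ?_⟩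
  · simp only [List.length_append, List.length_take, List.length_drop]
    omega
  · rw [A.profile_append_congr (profile_eq_of_profileVector_eq (htake i) (htake j) heq hA),
      List.take_append_drop]

theorem exists_profile_eq_length_le (S : Finset (PAut σ)) {v : List σ} (hv : v ≠ []) :
    ∃ w, w ≠ [] ∧ w.length ≤ 2 ^ (∑ A ∈ S, Fintype.card A.Q ^ 2 * numPri A) ∧
      ∀ A ∈ S, A.Profile w = A.Profile v := by
  induction hn : v.length using Nat.strong_induction_on generalizing v with
  | _ n ih =>
    by_cases hlong : 2 ^ (∑ A ∈ S, Fintype.card A.Q ^ 2 * numPri A) < v.length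
    · obtain ⟨w, hw, hlt, hwv⟩ := exists_shorter_profile_eq S hlong
      obtain ⟨w', hw', hlen, hw'w⟩ := ih _ (hn ▸ hlt) hw rfl
      exact ⟨w', hw', hlen, fun A hA => (hw'w A hA).trans (hwv A hA)⟩
    · exact ⟨v, hv, not_lt.1 hlong, fun _ _ => rfl⟩

end PAut

theorem parity_periodic_word_length_general (σ : Type)
    (Pos Neg : Finset (PAut σ)) :
    (∃ (v : List σ) (hv : v ≠ []),
        (∀ A ∈ Pos, PAccepts A (periodicWord v hv)) ∧
        (∀ A ∈ Neg, ¬ PAccepts A (periodicWord v hv))) →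
    ∃ (v' : List σ) (hv' : v' ≠ []),
      v'.length ≤ 2 ^ (∑ A ∈ Pos ∪ Neg, (Fintype.card A.Q) ^ 2 * numPri A) ∧
      (∀ A ∈ Pos, PAccepts A (periodicWord v' hv')) ∧
      (∀ A ∈ Neg, ¬ PAccepts A (periodicWord v' hv')) := by
  rintro ⟨v, hv, hPos, hNeg⟩
  obtain ⟨w, hw, hlen, hprof⟩ := PAut.exists_profile_eq_length_le (Pos ∪ Neg) hv
  have hacc : ∀ A ∈ Pos ∪ Neg, PAccepts A (periodicWord w hw) ↔ PAccepts A (periodicWord v hv) :=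
    fun A hA => A.paccepts_periodicWord_congr hw hv (hprof A hA)
  exact ⟨w, hw, hlen, fun A hA => (hacc A (Finset.mem_union_left _ hA)).2 (hPos A hA),
    fun A hA h => hNeg A hA ((hacc A (Finset.mem_union_right _ hA)).1 h)⟩

/-- **Lemma.** If some periodic word `v^ω` is accepted by every parity automaton of
`Pos` and rejected by every parity automaton of `Neg`, then there is such a `v'`
with `|v'| ≤ 2^k`, where `k = Σ_A |Q_A|² · n_A` and `n_A` is the number of
distinct priorities of `A`. -/
theorem parity_periodic_word_length (σ : Type) (hσ : Nonempty σ)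
    (Pos Neg : Finset (PAut σ)) :
    (∃ (v : List σ) (hv : v ≠ []),
        (∀ A ∈ Pos, PAccepts A (periodicWord v hv)) ∧
        (∀ A ∈ Neg, ¬ PAccepts A (periodicWord v hv))) →
    ∃ (v' : List σ) (hv' : v' ≠ []),
      v'.length ≤ 2 ^ (∑ A ∈ Pos ∪ Neg, (Fintype.card A.Q) ^ 2 * numPri A) ∧
      (∀ A ∈ Pos, PAccepts A (periodicWord v' hv')) ∧
      (∀ A ∈ Neg, ¬ PAccepts A (periodicWord v' hv')) :=
  parity_periodic_word_length_general σ Pos Neg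
end
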